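/- arXiv:0804.3258 — 7 statements merged into one kernel-verified Lean document; each statement's English description precedes it below -/
import Mathlib

section
/- Let V be a complex inner product space and let A, B : V → V be symmetric linear maps. Suppose C ≥ 0 is a real constant such that |Re⟨A(Bf) + B(Af), f⟩| ≤ C·‖Bf‖² for every f ∈ V. If t > C is a real number and f ∈ V satisfies Af + t·Bf = 0, then Af = 0 and Bf = 0. In particular, if B is injective, then the kernel of A + t·B is zero for every t > C. -/
/-!
By symmetry of `A` and `B`, `Re⟪ABf + BAf, f⟫ = 2 Re⟪Af, Bf⟫`, which equals `-2t‖Bf‖²` when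
`Af = -t Bf`. The estimate then gives `2|t|‖Bf‖² ≤ C‖Bf‖² < t‖Bf‖²` as soon as `Bf ≠ 0`,
which is absurd; so `Bf = 0`, and then `Af = 0`.
-/

open scoped InnerProductSpace

open RCLike

section

variable {𝕜 V : Type*} [RCLike 𝕜]

theorem re_inner_eq_neg_mul_norm_sq_of_add_smul_eq_zero [SeminormedAddCommGroup V]
    [InnerProductSpace 𝕜 V] {x y : V} {t : ℝ} (h : x + (t : 𝕜) • y = 0) :
    re ⟪x, y⟫_𝕜 = -(t * ‖y‖ ^ 2) := by
  rw [eq_neg_of_add_eq_zero_left h, inner_neg_left, inner_smul_left, conj_ofReal, map_neg,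
    re_ofReal_mul, inner_self_eq_norm_sq]

theorem LinearMap.IsSymmetric.re_inner_anticomm_self [SeminormedAddCommGroup V]
    [InnerProductSpace 𝕜 V] {A B : V →ₗ[𝕜] V} (hA : A.IsSymmetric) (hB : B.IsSymmetric) (f : V) :
    re ⟪A (B f) + B (A f), f⟫_𝕜 = 2 * re ⟪A f, B f⟫_𝕜 := by
  rw [inner_add_left, map_add, hA (B f) f, hB (A f) f, inner_re_symm (B f) (A f)]
  ring

theorem LinearMap.IsSymmetric.apply_eq_zero_of_add_smul_eq_zero [NormedAddCommGroup V]
    [InnerProductSpace 𝕜 V] {A B : V →ₗ[𝕜] V} (hA : A.IsSymmetric) (hB : B.IsSymmetric) {C : ℝ}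
    (hest : ∀ f : V, |re ⟪A (B f) + B (A f), f⟫_𝕜| ≤ C * ‖B f‖ ^ 2) {t : ℝ} (ht : C < t)
    {f : V} (hf : A f + (t : 𝕜) • B f = 0) : B f = 0 := by
  have hre : re ⟪A (B f) + B (A f), f⟫_𝕜 = -(2 * t * ‖B f‖ ^ 2) := by
    rw [hA.re_inner_anticomm_self hB, re_inner_eq_neg_mul_norm_sq_of_add_smul_eq_zero hf]
    ring
  obtain ⟨hlower, hupper⟩ := abs_le.mp (hest f)
  rw [hre] at hlower hupper
  have hnorm : ‖B f‖ ^ 2 = 0 := by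
    by_contra hne
    have hpos : 0 < ‖B f‖ ^ 2 := lt_of_le_of_ne (sq_nonneg _) (Ne.symm hne)
    nlinarith [mul_lt_mul_of_pos_right ht hpos]
  simpa using hnorm

end

theorem vanishing_kernel_general {V : Type*} [NormedAddCommGroup V] [InnerProductSpace ℂ V]
    (A B : V →ₗ[ℂ] V)
    (hA : ∀ v w : V, ⟪A v, w⟫_ℂ = ⟪v, A w⟫_ℂ)
    (hB : ∀ v w : V, ⟪B v, w⟫_ℂ = ⟪v, B w⟫_ℂ)
    (C : ℝ)
    (hest : ∀ f : V, |(⟪A (B f) + B (A f), f⟫_ℂ).re| ≤ C * ‖B f‖ ^ 2) :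
    (∀ t : ℝ, C < t → ∀ f : V, A f + (t : ℂ) • B f = 0 → A f = 0 ∧ B f = 0) ∧
    (Function.Injective B →
      ∀ t : ℝ, C < t → ∀ f : V, A f + (t : ℂ) • B f = 0 → f = 0) := by
  have hkernel (t : ℝ) (ht : C < t) (f : V) (hf : A f + (t : ℂ) • B f = 0) :
      A f = 0 ∧ B f = 0 := by
    have hBf : B f = 0 := LinearMap.IsSymmetric.apply_eq_zero_of_add_smul_eq_zero hA hB hest ht hf
    exact ⟨by simpa [hBf] using hf, hBf⟩
  exact ⟨hkernel, fun hinj t ht f hf => hinj ((hkernel t ht f hf).2.trans (map_zero B).symm)⟩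

/-- If `A, B` are symmetric operators on a complex inner product space, the
anticommutator `AB + BA` is controlled by `‖Bf‖²` with constant `C ≥ 0`, and `t > C`,
then `Af + t·Bf = 0` forces `Af = 0` and `Bf = 0`; in particular if `B` is injective
the kernel of `A + t·B` is zero. -/
theorem vanishing_kernel {V : Type*} [NormedAddCommGroup V] [InnerProductSpace ℂ V]
    (A B : V →ₗ[ℂ] V)
    (hA : ∀ v w : V, ⟪A v, w⟫_ℂ = ⟪v, A w⟫_ℂ)
    (hB : ∀ v w : V, ⟪B v, w⟫_ℂ = ⟪v, B w⟫_ℂ)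
    (C : ℝ) (hC : 0 ≤ C)
    (hest : ∀ f : V, |(⟪A (B f) + B (A f), f⟫_ℂ).re| ≤ C * ‖B f‖ ^ 2) :
    (∀ t : ℝ, C < t → ∀ f : V, A f + (t : ℂ) • B f = 0 → A f = 0 ∧ B f = 0) ∧
    (Function.Injective B →
      ∀ t : ℝ, C < t → ∀ f : V, A f + (t : ℂ) • B f = 0 → f = 0) :=
  vanishing_kernel_general A B hA hB C hest
end

section
/- Let α be a real number that is not an integer. Then for every smooth 2π-periodic function g : ℝ → ℂ there exists a smooth 2π-periodic function f : ℝ → ℂ satisfying f'(θ) + iα·f(θ) = g(θ) for all θ ∈ ℝ. -/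
open Real

open intervalIntegral

/-- If `α` is not an integer, the twisted operator `f ↦ f' + iαf` is surjective on
smooth `2π`-periodic functions. -/
theorem twisted_operator_surjective (α : ℝ) (hα : ∀ m : ℤ, α ≠ m) :
    ∀ g : ℝ → ℂ, ContDiff ℝ (⊤ : ℕ∞) g → (∀ θ : ℝ, g (θ + 2 * π) = g θ) →
      ∃ f : ℝ → ℂ, ContDiff ℝ (⊤ : ℕ∞) f ∧ (∀ θ : ℝ, f (θ + 2 * π) = f θ) ∧
        ∀ θ : ℝ, deriv f θ + Complex.I * (α : ℂ) * f θ = g θ := by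
  intro g hg hper
  set β : ℂ := Complex.I * α with hβ
  have hexp : ∀ c : ℂ, ContDiff ℝ (⊤ : ℕ∞) (fun t : ℝ => Complex.exp (c * t)) := by
    intro c
    exact Complex.contDiff_exp.comp (contDiff_const.mul Complex.ofRealCLM.contDiff)
  set h : ℝ → ℂ := fun t => Complex.exp (β * t) * g t with hh
  have hhsm : ContDiff ℝ (⊤ : ℕ∞) h := (hexp β).mul hg
  have hhc : Continuous h := hhsm.continuous
  set F : ℝ → ℂ := fun x => ∫ t in (0:ℝ)..x, h t with hFdef
  have hF' : ∀ x, HasDerivAt F (h x) x := fun x =>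
    integral_hasDerivAt_right (hhc.intervalIntegrable _ _)
      (hhc.stronglyMeasurableAtFilter _ _) hhc.continuousAt
  have hFsm : ContDiff ℝ (⊤ : ℕ∞) F := by
    rw [contDiff_infty_iff_deriv]
    have hdF : deriv F = h := funext fun x => (hF' x).deriv
    exact ⟨fun x => (hF' x).differentiableAt, hdF ▸ hhsm⟩
  set e : ℂ := Complex.exp (β * (2 * π)) with he
  have hne : e ≠ 1 := by
    rw [he, Ne, Complex.exp_eq_one_iff]
    rintro ⟨n, hn⟩
    apply hα n
    have h2 : (2 * (π:ℂ) * Complex.I) ≠ 0 :=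
      mul_ne_zero (mul_ne_zero two_ne_zero
        (Complex.ofReal_ne_zero.2 Real.pi_ne_zero)) Complex.I_ne_zero
    have hn' : (α:ℂ) * (2 * (π:ℂ) * Complex.I) = (n:ℂ) * (2 * (π:ℂ) * Complex.I) := by
      rw [hβ] at hn
      linear_combination hn
    have := mul_right_cancel₀ h2 hn'
    exact_mod_cast this
  set A : ℂ := ∫ t in (0:ℝ)..(2 * π), h t with hA
  set C : ℂ := A / (e - 1) with hC
  have hCA : C * (e - 1) = A := div_mul_cancel₀ A (sub_ne_zero.mpr hne)
  set f : ℝ → ℂ := fun θ => Complex.exp (-β * θ) * (C + F θ) with hf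
  have hfsm : ContDiff ℝ (⊤ : ℕ∞) f := (hexp (-β)).mul (contDiff_const.add hFsm)
  -- shift property of h
  have hshift : ∀ t : ℝ, h (t + 2 * π) = e * h t := by
    intro t
    simp only [hh, hper, he]
    rw [← mul_assoc, ← Complex.exp_add]
    congr 2
    push_cast
    ring
  have hFper : ∀ θ : ℝ, F (θ + 2 * π) = A + e * F θ := by
    intro θ
    have h1 : (∫ t in (0:ℝ)..(2*π), h t) + (∫ t in (2*π)..(θ + 2*π), h t)
        = ∫ t in (0:ℝ)..(θ + 2*π), h t :=
      integral_add_adjacent_intervals (hhc.intervalIntegrable _ _)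
        (hhc.intervalIntegrable _ _)
    have h2 : (∫ t in (2*π)..(θ + 2*π), h t) = e * F θ := by
      have h3 := intervalIntegral.integral_comp_add_right (a := (0:ℝ)) (b := θ)
        (f := h) (2 * π)
      rw [zero_add] at h3
      rw [← h3]
      simp_rw [hshift]
      rw [intervalIntegral.integral_const_mul]
    show (∫ t in (0:ℝ)..(θ + 2 * π), h t) = A + e * F θ
    rw [← h1, h2, hA]
  have hE2 : Complex.exp (-β * ((2:ℂ) * π)) * e = 1 := by
    rw [he, ← Complex.exp_add]
    simp
  have hfper : ∀ θ : ℝ, f (θ + 2 * π) = f θ := by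
    intro θ
    show Complex.exp (-β * ((θ + 2*π : ℝ) : ℂ)) * (C + F (θ + 2*π))
      = Complex.exp (-β * θ) * (C + F θ)
    have hsplit : Complex.exp (-β * ((θ + 2*π : ℝ) : ℂ))
        = Complex.exp (-β * θ) * Complex.exp (-β * ((2:ℂ) * π)) := by
      rw [← Complex.exp_add]
      congr 1
      push_cast
      ring
    rw [hFper θ, hsplit]
    linear_combination (Complex.exp (-β * (θ:ℂ)) * (C + F θ)) * hE2
      - (Complex.exp (-β * (θ:ℂ)) * Complex.exp (-β * ((2:ℂ) * π))) * hCA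
  refine ⟨f, hfsm, hfper, fun θ => ?_⟩
  have hE' : HasDerivAt (fun t : ℝ => Complex.exp (-β * t))
      (-β * Complex.exp (-β * θ)) θ := by
    have h1 : HasDerivAt (fun t : ℝ => -β * (t:ℂ)) (-β) θ := by
      simpa using (Complex.ofRealCLM.hasDerivAt (x := θ)).const_mul (-β)
    have h2 := h1.cexp
    simpa [mul_comm] using h2
  have hf' : HasDerivAt f
      (-β * Complex.exp (-β * θ) * (C + F θ) + Complex.exp (-β * θ) * h θ) θ :=
    hE'.mul ((hF' θ).const_add C)
  rw [hf'.deriv]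
  have hcancel : Complex.exp (-β * θ) * h θ = g θ := by
    rw [hh, ← mul_assoc, ← Complex.exp_add, neg_mul, neg_add_cancel,
      Complex.exp_zero, one_mul]
  show _ + β * f θ = g θ
  rw [hf]
  linear_combination hcancel
end

section
/- Fix real numbers ε with 0 < ε < 1, R > 0, and s > 0. Let ρ : ℝ → ℝ be a smooth monotone increasing function with ρ(0) = 0, ρ(x) = ε for all x ≥ R, and ρ(x) = −ε for all x ≤ −R. For an integer n, the function g_n : ℝ → ℝ defined by g_n(x) = exp( s·∫₀ˣ (n − ρ(u)) du ) is square-integrable on ℝ (i.e. ∫_ℝ g_n(x)² dx < ∞) if and only if n = 0. -/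
open Real MeasureTheory

lemma integrable_exp_neg_abs' {b : ℝ} (hb : 0 < b) :
    Integrable (fun x : ℝ => Real.exp (-b * |x|)) := by
  have h1 : Integrable (fun x : ℝ => Real.exp (-|x|)) := by
    have : (Set.Iic (0:ℝ)) ∪ (Set.Ioi 0) = Set.univ := Set.Iic_union_Ioi
    rw [← integrableOn_univ, ← this]
    apply IntegrableOn.union
    · apply (integrableOn_exp_Iic 0).congr_fun ?_ measurableSet_Iic
      intro x hx
      simp only [Set.mem_Iic] at hx
      simp [abs_of_nonpos hx]
    · apply (exp_neg_integrableOn_Ioi 0 one_pos).congr_fun ?_ measurableSet_Ioi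
      intro x hx
      simp only [Set.mem_Ioi] at hx
      simp [abs_of_pos hx]
  have := (integrable_comp_mul_left_iff (fun y : ℝ => Real.exp (-|y|)) hb.ne').2 h1
  refine this.congr (Filter.Eventually.of_forall fun x => ?_)
  simp [abs_mul, abs_of_pos hb]

/-- BS⁺ model, even Fourier modes: `gₙ(x) = exp(s·∫₀ˣ (n − ρ))` is square-integrable
on `ℝ` if and only if `n = 0`. -/
theorem BSplus_even_mode_L2_iff (ε R s : ℝ) (hε : 0 < ε) (hε1 : ε < 1)
    (hR : 0 < R) (hs : 0 < s)
    (ρ : ℝ → ℝ) (hρ : ContDiff ℝ (⊤ : ℕ∞) ρ) (hmono : Monotone ρ) (h0 : ρ 0 = 0)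
    (hpos : ∀ x : ℝ, R ≤ x → ρ x = ε) (hneg : ∀ x : ℝ, x ≤ -R → ρ x = -ε)
    (n : ℤ) :
    Integrable (fun x : ℝ => (Real.exp (s * ∫ u in (0:ℝ)..x, ((n : ℝ) - ρ u))) ^ 2)
      ↔ n = 0 := by
  have hρc : Continuous ρ := hρ.continuous
  have hub : ∀ u : ℝ, ρ u ≤ ε := by
    intro u
    rcases le_total u R with h | h
    · calc ρ u ≤ ρ R := hmono h
        _ = ε := hpos R le_rfl
    · exact (hpos u h).le
  have hlb : ∀ u : ℝ, -ε ≤ ρ u := by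
    intro u
    rcases le_total u (-R) with h | h
    · exact (hneg u h).ge
    · calc -ε = ρ (-R) := (hneg (-R) le_rfl).symm
        _ ≤ ρ u := hmono h
  have hii : ∀ a b : ℝ, IntervalIntegrable (fun u => (n:ℝ) - ρ u) volume a b := fun a b =>
    (continuous_const.sub hρc).intervalIntegrable a b
  have hiiρ : ∀ a b : ℝ, IntervalIntegrable ρ volume a b := fun a b =>
    hρc.intervalIntegrable a b
  set F : ℝ → ℝ := fun x => ∫ u in (0:ℝ)..x, ((n:ℝ) - ρ u) with hFdef
  have hFc : Continuous F := intervalIntegral.continuous_primitive hii 0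
  constructor
  · intro hint
    by_contra hn
    rcases lt_or_gt_of_ne hn with hlt | hgt
    · -- n ≤ -1 : not integrable on Iic 0
      have hn1 : (n : ℝ) ≤ -1 := by exact_mod_cast Int.le_sub_one_of_lt hlt
      have key : ∀ x : ℝ, x ≤ 0 → (1:ℝ) ≤ (Real.exp (s * F x)) ^ 2 := by
        intro x hx
        have h1 : (∫ u in x..(0:ℝ), ((n:ℝ) - ρ u)) ≤ 0 := by
          have hb : (∫ u in x..(0:ℝ), ((n:ℝ) - ρ u)) ≤ ∫ _u in x..(0:ℝ), (ε - 1 : ℝ) := by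
            apply intervalIntegral.integral_mono_on hx (hii x 0)
              (intervalIntegrable_const)
            intro u _
            have := hlb u
            linarith
          have : (∫ _u in x..(0:ℝ), (ε - 1 : ℝ)) = (0 - x) * (ε - 1) := by
            simp [smul_eq_mul]; ring
          nlinarith [this ▸ hb]
        have hF0 : 0 ≤ F x := by
          have : F x = -(∫ u in x..(0:ℝ), ((n:ℝ) - ρ u)) := by
            rw [hFdef]
            exact intervalIntegral.integral_symm x 0
          rw [this]; linarith
        have : (1:ℝ) ≤ Real.exp (s * F x) := by
          rw [show (1:ℝ) = Real.exp 0 by simp]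
          exact Real.exp_le_exp.2 (by positivity)
        nlinarith
      have hre : IntegrableOn (fun x : ℝ => (Real.exp (s * F x)) ^ 2) (Set.Iic 0) :=
        hint.integrableOn
      have h1 : IntegrableOn (fun _ : ℝ => (1:ℝ)) (Set.Iic 0) := by
        apply Integrable.mono' hre aestronglyMeasurable_const
        rw [ae_restrict_iff' measurableSet_Iic]
        exact Filter.Eventually.of_forall fun x hx => by
          simpa using key x hx
      rw [integrableOn_const_iff] at h1
      simp [Real.volume_Iic] at h1
    · -- 1 ≤ n : not integrable on Ici 0
      have hn1 : (1:ℝ) ≤ (n : ℝ) := by exact_mod_cast hgt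
      have key : ∀ x : ℝ, 0 ≤ x → (1:ℝ) ≤ (Real.exp (s * F x)) ^ 2 := by
        intro x hx
        have hF0 : 0 ≤ F x := by
          have hb : (∫ _u in (0:ℝ)..x, (1 - ε : ℝ)) ≤ F x := by
            apply intervalIntegral.integral_mono_on hx intervalIntegrable_const (hii 0 x)
            intro u _
            have := hub u
            linarith
          have : (∫ _u in (0:ℝ)..x, (1 - ε : ℝ)) = (x - 0) * (1 - ε) := by
            simp [smul_eq_mul]; ring
          nlinarith [this ▸ hb]
        have : (1:ℝ) ≤ Real.exp (s * F x) := by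
          rw [show (1:ℝ) = Real.exp 0 by simp]
          exact Real.exp_le_exp.2 (by positivity)
        nlinarith
      have hre : IntegrableOn (fun x : ℝ => (Real.exp (s * F x)) ^ 2) (Set.Ici 0) :=
        hint.integrableOn
      have h1 : IntegrableOn (fun _ : ℝ => (1:ℝ)) (Set.Ici 0) := by
        apply Integrable.mono' hre aestronglyMeasurable_const
        rw [ae_restrict_iff' measurableSet_Ici]
        exact Filter.Eventually.of_forall fun x hx => by
          simpa using key x hx
      rw [integrableOn_const_iff] at h1
      simp [Real.volume_Ici] at h1
  · intro hn
    subst hn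
    -- key bound : F x ≤ ε * (R - |x|)
    have hρ0 : ∀ u : ℝ, 0 ≤ u → 0 ≤ ρ u := fun u hu => h0 ▸ hmono hu
    have hρ0' : ∀ u : ℝ, u ≤ 0 → ρ u ≤ 0 := fun u hu => h0 ▸ hmono hu
    have hFbound : ∀ x : ℝ, F x ≤ ε * (R - |x|) := by
      intro x
      have hFx : F x = -(∫ u in (0:ℝ)..x, ρ u) := by
        rw [hFdef]
        simp [intervalIntegral.integral_neg]
      rcases le_total 0 x with hx | hx
      · rw [abs_of_nonneg hx, hFx]
        rcases le_total x R with hxR | hxR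
        · have h1 : 0 ≤ ∫ u in (0:ℝ)..x, ρ u :=
            intervalIntegral.integral_nonneg hx fun u hu => hρ0 u hu.1
          nlinarith
        · have hsplit : (∫ u in (0:ℝ)..x, ρ u)
              = (∫ u in (0:ℝ)..R, ρ u) + ∫ u in R..x, ρ u :=
            (intervalIntegral.integral_add_adjacent_intervals (hiiρ 0 R) (hiiρ R x)).symm
          have h1 : 0 ≤ ∫ u in (0:ℝ)..R, ρ u :=
            intervalIntegral.integral_nonneg hR.le fun u hu => hρ0 u hu.1
          have h2 : (∫ u in R..x, ρ u) = (x - R) * ε := by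
            rw [intervalIntegral.integral_congr (g := fun _ => ε)
              (fun u hu => hpos u ((le_inf le_rfl hxR).trans hu.1))]
            simp [smul_eq_mul]
          nlinarith
      · rw [abs_of_nonpos hx, hFx, intervalIntegral.integral_symm]
        rcases le_total (-R) x with hxR | hxR
        · have h1 : (∫ u in x..(0:ℝ), ρ u) ≤ 0 := by
            rw [← neg_nonneg, ← intervalIntegral.integral_neg]
            exact intervalIntegral.integral_nonneg hx fun u hu => by
              have := hρ0' u hu.2; linarith
          nlinarith
        · have hsplit : (∫ u in x..(0:ℝ), ρ u)
              = (∫ u in x..(-R), ρ u) + ∫ u in (-R)..(0:ℝ), ρ u :=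
            (intervalIntegral.integral_add_adjacent_intervals (hiiρ x (-R)) (hiiρ (-R) 0)).symm
          have h1 : (∫ u in (-R)..(0:ℝ), ρ u) ≤ 0 := by
            rw [← neg_nonneg, ← intervalIntegral.integral_neg]
            exact intervalIntegral.integral_nonneg (by linarith) fun u hu => by
              have := hρ0' u hu.2; linarith
          have h2 : (∫ u in x..(-R), ρ u) = (-R - x) * (-ε) := by
            rw [intervalIntegral.integral_congr (g := fun _ => -ε)
              (fun u hu => hneg u (hu.2.trans (sup_le hxR le_rfl)))]
            simp [smul_eq_mul]
          nlinarith
    -- dominate by C * exp(-(2sε)|x|)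
    have hdom : Integrable (fun x : ℝ =>
        Real.exp (2 * s * ε * R) * Real.exp (-(2 * s * ε) * |x|)) :=
      (integrable_exp_neg_abs' (by positivity)).const_mul _
    apply Integrable.mono' hdom
    · exact ((Real.continuous_exp.comp (continuous_const.mul hFc)).pow 2).aestronglyMeasurable
    · refine Filter.Eventually.of_forall fun x => ?_
      have h1 : (Real.exp (s * F x)) ^ 2 = Real.exp (2 * (s * F x)) := by
        rw [sq, ← Real.exp_add]; ring_nf
      have h2 : 2 * (s * F x) ≤ 2 * s * ε * R + (-(2 * s * ε)) * |x| := by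
        have := hFbound x
        nlinarith
      rw [Real.norm_eq_abs, abs_of_nonneg (by positivity), h1, ← Real.exp_add]
      exact Real.exp_le_exp.2 h2
end

section
/- Fix real numbers ε with 0 < ε < 1, R > 0, and s > 0. Let ρ : ℝ → ℝ be a smooth monotone increasing function with ρ(0) = 0, ρ(x) = ε for all x ≥ R, and ρ(x) = −ε for all x ≤ −R. Then for every integer n, the function h_n : ℝ → ℝ defined by h_n(x) = exp( s·∫₀ˣ (ρ(u) − n) du ) is not square-integrable on ℝ (i.e. ∫_ℝ h_n(x)² dx = ∞). -/
open Real MeasureTheory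

/-- A function that is `≥ 1` on a measurable set of infinite measure is not integrable. -/
lemma not_integrable_of_one_le_on (f : ℝ → ℝ) (S : Set ℝ) (hS : MeasurableSet S)
    (hμ : volume S = ⊤) (h1 : ∀ x ∈ S, (1 : ℝ) ≤ f x) : ¬ Integrable f := by
  intro hf
  have hres : Integrable f (volume.restrict S) := hf.restrict
  have hconst : Integrable (fun _ : ℝ => (1 : ℝ)) (volume.restrict S) := by
    refine hres.mono' aestronglyMeasurable_const ?_
    refine (ae_restrict_iff' hS).2 (Filter.Eventually.of_forall fun x hx => ?_)
    simpa using h1 x hx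
  rw [integrable_const_iff] at hconst
  rcases hconst with h | h
  · norm_num at h
  · have h := h.measure_univ_lt_top
    simp [Measure.restrict_apply_univ, hμ] at h

/-- BS⁺ model, odd Fourier modes: for every integer `n`, the function
`hₙ(x) = exp(s·∫₀ˣ (ρ − n))` is not square-integrable on `ℝ`. -/
theorem BSplus_odd_mode_not_L2 (ε R s : ℝ) (hε : 0 < ε) (hε1 : ε < 1)
    (hR : 0 < R) (hs : 0 < s)
    (ρ : ℝ → ℝ) (hρ : ContDiff ℝ (⊤ : ℕ∞) ρ) (hmono : Monotone ρ) (h0 : ρ 0 = 0)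
    (hpos : ∀ x : ℝ, R ≤ x → ρ x = ε) (hneg : ∀ x : ℝ, x ≤ -R → ρ x = -ε)
    (n : ℤ) :
    ¬ Integrable (fun x : ℝ => (Real.exp (s * ∫ u in (0:ℝ)..x, (ρ u - (n : ℝ)))) ^ 2) := by
  have hρc : Continuous ρ := hρ.continuous
  have hii : ∀ a b : ℝ, IntervalIntegrable (fun u => ρ u - (n : ℝ)) volume a b :=
    fun a b => (hρc.sub continuous_const).intervalIntegrable a b
  rcases le_or_gt (n : ℝ) 0 with hn | hn
  · refine not_integrable_of_one_le_on _ (Set.Ici 0) measurableSet_Ici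
      Real.volume_Ici (fun x hx => ?_)
    have h1 : 0 ≤ ∫ u in (0:ℝ)..x, (ρ u - (n : ℝ)) := by
      refine intervalIntegral.integral_nonneg hx fun u hu => ?_
      have h2 : ρ 0 ≤ ρ u := hmono hu.1
      rw [h0] at h2
      linarith
    have := Real.one_le_exp (mul_nonneg hs.le h1)
    nlinarith
  · refine not_integrable_of_one_le_on _ (Set.Iic 0) measurableSet_Iic
      Real.volume_Iic (fun x hx => ?_)
    have hn1 : (1 : ℝ) ≤ (n : ℝ) := by exact_mod_cast hn
    have h1 : 0 ≤ ∫ u in (0:ℝ)..x, (ρ u - (n : ℝ)) := by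
      rw [intervalIntegral.integral_symm]
      have h2 : 0 ≤ ∫ u in x..(0:ℝ), -(ρ u - (n : ℝ)) := by
        refine intervalIntegral.integral_nonneg hx fun u hu => ?_
        have h3 : ρ u ≤ ε := by
          have := hmono (le_max_left u R)
          rwa [hpos (max u R) (le_max_right u R)] at this
        linarith
      rw [intervalIntegral.integral_neg] at h2
      linarith
    have := Real.one_le_exp (mul_nonneg hs.le h1)
    nlinarith
end

section
/- Fix real numbers ε with 0 < ε < 1, R > 0, and s > 0. Let ρ : ℝ → ℝ be a smooth monotone increasing function with ρ(0) = 0, ρ(x) = ε for all x ≥ R, and ρ(x) = −ε for all x ≤ −R. Let f : ℝ × ℝ → ℂ be infinitely differentiable with f(x, θ + 2π) = f(x, θ) for all (x, θ), square-integrable on ℝ × [0, 2π), and satisfying ∂f/∂x − i·s·∂f/∂θ − s·ρ(x)·f = 0 everywhere. Then f is identically zero. -/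
open Real MeasureTheory Set intervalIntegral

/-! ### Auxiliary lemmas -/

/-- An integrable function on `ℝ` cannot dominate a growing exponential on a ray. -/
lemma aux_exp_contra (g : ℝ → ℝ) (hg : Integrable g) (c a C x₀ : ℝ)
    (hc : 0 < c) (ha : 0 < a) (hC : 0 < C)
    (h : ∀ x, x₀ ≤ x → c * Real.exp (a * x) - C ≤ g x) : False := by
  set x₁ : ℝ := max x₀ (Real.log ((C + 1) / c) / a) with hx₁
  have key : ∀ x, x₁ ≤ x → (1:ℝ) ≤ g x := by
    intro x hx
    have hx0 : x₀ ≤ x := le_trans (le_max_left _ _) hx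
    have h2 : Real.log ((C + 1) / c) / a ≤ x := le_trans (le_max_right _ _) hx
    have h3 : Real.log ((C + 1) / c) ≤ a * x := by
      rw [div_le_iff₀ ha] at h2; linarith [h2]
    have h4 : (C + 1) / c ≤ Real.exp (a * x) := by
      calc (C + 1) / c = Real.exp (Real.log ((C + 1) / c)) := by
            rw [Real.exp_log (by positivity)]
        _ ≤ Real.exp (a * x) := Real.exp_le_exp.2 h3
    have h5 : C + 1 ≤ c * Real.exp (a * x) := by
      rw [div_le_iff₀ hc] at h4; linarith [h4]
    have := h x hx0
    linarith
  have hint : Integrable (fun _ : ℝ => (1:ℝ)) (volume.restrict (Ici x₁)) := by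
    refine Integrable.mono' (hg.restrict (s := Ici x₁)) aestronglyMeasurable_const ?_
    refine (ae_restrict_iff' measurableSet_Ici).2 (Filter.Eventually.of_forall fun x hx => ?_)
    rw [norm_one]
    exact key x hx
  rw [integrable_const_iff] at hint
  rcases hint with h1 | h2
  · exact one_ne_zero h1
  · rw [isFiniteMeasure_iff, Measure.restrict_apply_univ, Real.volume_Ici] at h2
    exact (lt_irrefl _ h2)

lemma aux_hasDerivAt_fst (f : ℝ × ℝ → ℂ) (hf : ContDiff ℝ (⊤ : ℕ∞) f) (x θ : ℝ) :
    HasDerivAt (fun x' => f (x', θ)) (fderiv ℝ f (x, θ) (1, 0)) x := by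
  have h1 : HasDerivAt (fun x' : ℝ => (x', θ)) ((1:ℝ), (0:ℝ)) x :=
    (hasDerivAt_id x).prodMk (hasDerivAt_const x θ)
  exact ((hf.differentiable (by simp) (x, θ)).hasFDerivAt).comp_hasDerivAt x h1

lemma aux_hasDerivAt_snd (f : ℝ × ℝ → ℂ) (hf : ContDiff ℝ (⊤ : ℕ∞) f) (x θ : ℝ) :
    HasDerivAt (fun θ' => f (x, θ')) (fderiv ℝ f (x, θ) (0, 1)) θ := by
  have h1 : HasDerivAt (fun θ' : ℝ => (x, θ')) ((0:ℝ), (1:ℝ)) θ :=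
    (hasDerivAt_const θ x).prodMk (hasDerivAt_id θ)
  exact ((hf.differentiable (by simp) (x, θ)).hasFDerivAt).comp_hasDerivAt θ h1

lemma aux_cont_g1 (f : ℝ × ℝ → ℂ) (hf : ContDiff ℝ (⊤ : ℕ∞) f) :
    Continuous (fun p : ℝ × ℝ => fderiv ℝ f p (1, 0)) :=
  (hf.continuous_fderiv (by simp)).clm_apply continuous_const

lemma aux_cont_g2 (f : ℝ × ℝ → ℂ) (hf : ContDiff ℝ (⊤ : ℕ∞) f) :
    Continuous (fun p : ℝ × ℝ => fderiv ℝ f p (0, 1)) :=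
  (hf.continuous_fderiv (by simp)).clm_apply continuous_const

lemma aux_cont_e (n : ℤ) : Continuous (fun θ : ℝ => Complex.exp (-(n:ℂ)*Complex.I*θ)) :=
  Complex.continuous_exp.comp (continuous_const.mul Complex.continuous_ofReal)

/-- derivative of the Fourier kernel -/
lemma aux_hasDerivAt_e (n : ℤ) (θ : ℝ) :
    HasDerivAt (fun θ' : ℝ => Complex.exp (-(n:ℂ)*Complex.I*θ'))
      (-(n:ℂ)*Complex.I * Complex.exp (-(n:ℂ)*Complex.I*θ)) θ := by
  have hz : HasDerivAt (fun z : ℂ => Complex.exp (-(n:ℂ)*Complex.I*z))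
      (-(n:ℂ)*Complex.I * Complex.exp (-(n:ℂ)*Complex.I*(θ:ℂ))) (θ:ℂ) := by
    have h1 : HasDerivAt (fun z : ℂ => -(n:ℂ)*Complex.I*z) (-(n:ℂ)*Complex.I) (θ:ℂ) := by
      simpa using (hasDerivAt_id (θ:ℂ)).const_mul (-(n:ℂ)*Complex.I)
    simpa [mul_comm] using h1.cexp
  exact hz.comp_ofReal

/-- norm of the Fourier kernel is 1 -/
lemma aux_norm_e (n : ℤ) (θ : ℝ) : ‖Complex.exp (-(n:ℂ)*Complex.I*θ)‖ = 1 := by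
  have h : (-(n:ℂ)*Complex.I*(θ:ℂ)) = (((-n*θ : ℝ)):ℂ)*Complex.I := by push_cast; ring
  rw [h, Complex.norm_exp_ofReal_mul_I]

set_option maxHeartbeats 1000000 in
lemma aux_hasDerivAt_F (f : ℝ × ℝ → ℂ) (hf : ContDiff ℝ (⊤ : ℕ∞) f) (n : ℤ) (x : ℝ) :
    HasDerivAt (fun x' => ∫ θ in (0:ℝ)..(2*π), Complex.exp (-(n:ℂ)*Complex.I*θ) * f (x', θ))
      (∫ θ in (0:ℝ)..(2*π), Complex.exp (-(n:ℂ)*Complex.I*θ) * fderiv ℝ f (x, θ) (1, 0)) x := by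
  set e : ℝ → ℂ := fun θ => Complex.exp (-(n:ℂ)*Complex.I*θ) with he
  have hecont : Continuous e := aux_cont_e n
  have hKc : IsCompact ((Icc (x-1) (x+1)) ×ˢ (uIcc (0:ℝ) (2*π))) :=
    isCompact_Icc.prod isCompact_uIcc
  have hGc : Continuous (fun p : ℝ × ℝ => ‖e p.2 * fderiv ℝ f p (1,0)‖) :=
    ((hecont.comp continuous_snd).mul (aux_cont_g1 f hf)).norm
  have hne : ((Icc (x-1) (x+1)) ×ˢ (uIcc (0:ℝ) (2*π))).Nonempty := by
    refine ⟨(x, 0), ?_, left_mem_uIcc⟩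
    simp only [mem_Icc]
    constructor <;> linarith
  obtain ⟨p₀, -, hp₀⟩ := hKc.exists_isMaxOn hne hGc.continuousOn
  set C : ℝ := ‖e p₀.2 * fderiv ℝ f p₀ (1,0)‖ with hC
  have h1 : ∀ᶠ x' in nhds x, AEStronglyMeasurable (fun θ : ℝ => e θ * f (x', θ))
      (volume.restrict (uIoc (0:ℝ) (2*π))) :=
    Filter.Eventually.of_forall fun x' =>
      ((hecont.mul (hf.continuous.comp (Continuous.prodMk_right x'))).aestronglyMeasurable)
  have h2 : IntervalIntegrable (fun θ : ℝ => e θ * f (x, θ)) volume 0 (2*π) :=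
    (hecont.mul (hf.continuous.comp (Continuous.prodMk_right x))).intervalIntegrable _ _
  have h3 : AEStronglyMeasurable (fun θ : ℝ => e θ * fderiv ℝ f (x, θ) (1, 0))
      (volume.restrict (uIoc (0:ℝ) (2*π))) :=
    (hecont.mul ((aux_cont_g1 f hf).comp (Continuous.prodMk_right x))).aestronglyMeasurable
  have h4 : ∀ᵐ θ : ℝ ∂volume, θ ∈ uIoc (0:ℝ) (2*π) → ∀ x' ∈ Metric.ball x 1,
      ‖e θ * fderiv ℝ f (x', θ) (1, 0)‖ ≤ C := by
    refine Filter.Eventually.of_forall fun θ hθ x' hx' => ?_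
    have hθ' : θ ∈ uIcc (0:ℝ) (2*π) := uIoc_subset_uIcc hθ
    have hx'' : x' ∈ Icc (x-1) (x+1) := by
      rw [Metric.mem_ball, Real.dist_eq, abs_lt] at hx'
      constructor <;> linarith [hx'.1, hx'.2]
    exact isMaxOn_iff.1 hp₀ (x', θ) ⟨hx'', hθ'⟩
  have h5 : IntervalIntegrable (fun _ : ℝ => C) volume 0 (2*π) := intervalIntegrable_const
  have h6 : ∀ᵐ θ : ℝ ∂volume, θ ∈ uIoc (0:ℝ) (2*π) → ∀ x' ∈ Metric.ball x 1,
      HasDerivAt (fun x'' : ℝ => e θ * f (x'', θ)) (e θ * fderiv ℝ f (x', θ) (1, 0)) x' :=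
    Filter.Eventually.of_forall fun θ _ x' _ =>
      (aux_hasDerivAt_fst f hf x' θ).const_mul (e θ)
  exact (intervalIntegral.hasDerivAt_integral_of_dominated_loc_of_deriv_le
    (F := fun (x' : ℝ) (θ : ℝ) => e θ * f (x', θ))
    (F' := fun (x' : ℝ) (θ : ℝ) => e θ * fderiv ℝ f (x', θ) (1, 0))
    (Metric.ball_mem_nhds x one_pos) h1 h2 h3 h4 h5 h6).2

set_option maxHeartbeats 1600000 in
/-- BS⁺ model: every smooth, `2π`-periodic, square-integrable solution of the odd
equation `∂f/∂x − i·s·∂f/∂θ − s·ρ(x)·f = 0` vanishes identically. -/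
theorem BSplus_odd_kernel_zero (ε R s : ℝ) (hε : 0 < ε) (hε1 : ε < 1)
    (hR : 0 < R) (hs : 0 < s)
    (ρ : ℝ → ℝ) (hρ : ContDiff ℝ (⊤ : ℕ∞) ρ) (hmono : Monotone ρ) (h0 : ρ 0 = 0)
    (hpos : ∀ x : ℝ, R ≤ x → ρ x = ε) (hneg : ∀ x : ℝ, x ≤ -R → ρ x = -ε)
    (f : ℝ × ℝ → ℂ) (hf : ContDiff ℝ (⊤ : ℕ∞) f)
    (hper : ∀ x θ : ℝ, f (x, θ + 2 * π) = f (x, θ))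
    (hL2 : IntegrableOn (fun p => ‖f p‖ ^ 2) (Set.univ ×ˢ Set.Ico 0 (2 * π)))
    (hPDE : ∀ x θ : ℝ, deriv (fun x' => f (x', θ)) x
        - Complex.I * (s : ℂ) * deriv (fun θ' => f (x, θ')) θ
        - (s : ℂ) * (ρ x : ℂ) * f (x, θ) = 0) :
    ∀ x θ : ℝ, f (x, θ) = 0 := by
  have twopi : (0:ℝ) < 2*π := by positivity
  have hfc : Continuous f := hf.continuous
  have hρc : Continuous ρ := hρ.continuous
  set e : ℤ → ℝ → ℂ := fun n θ => Complex.exp (-(n:ℂ)*Complex.I*θ) with he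
  set F : ℤ → ℝ → ℂ := fun n x => ∫ θ in (0:ℝ)..(2*π), e n θ * f (x, θ) with hFdef
  -- PDE in terms of fderiv
  have hg1 : ∀ x θ : ℝ, fderiv ℝ f (x,θ) (1,0)
      = Complex.I*(s:ℂ)*(fderiv ℝ f (x,θ) (0,1)) + ((s:ℂ)*(ρ x:ℂ))*f (x,θ) := by
    intro x θ
    have h1 := (aux_hasDerivAt_fst f hf x θ).deriv
    have h2 := (aux_hasDerivAt_snd f hf x θ).deriv
    have h3 := hPDE x θ
    rw [h1, h2] at h3
    linear_combination h3
  -- integration by parts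
  have hparts : ∀ (n : ℤ) (x : ℝ), (∫ θ in (0:ℝ)..(2*π), e n θ * fderiv ℝ f (x,θ) (0,1))
      = (n:ℂ)*Complex.I * F n x := by
    intro n x
    have hu : ∀ θ ∈ uIcc (0:ℝ) (2*π), HasDerivAt (e n) (-(n:ℂ)*Complex.I * e n θ) θ :=
      fun θ _ => aux_hasDerivAt_e n θ
    have hv : ∀ θ ∈ uIcc (0:ℝ) (2*π),
        HasDerivAt (fun θ' => f (x, θ')) (fderiv ℝ f (x,θ) (0,1)) θ :=
      fun θ _ => aux_hasDerivAt_snd f hf x θ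
    have key := intervalIntegral.integral_mul_deriv_eq_deriv_mul hu hv
      ((continuous_const.mul (aux_cont_e n)).intervalIntegrable _ _)
      (((aux_cont_g2 f hf).comp (Continuous.prodMk_right x)).intervalIntegrable _ _)
    -- key : ∫ e n θ * fderiv = e n (2π) * f (x, 2π) - e n 0 * f (x, 0) - ∫ (-(n)I e n θ) * f (x,θ)
    have hb1 : e n (2*π) = 1 := by
      show Complex.exp (-(n:ℂ)*Complex.I*((2*π:ℝ):ℂ)) = 1
      have heq2 : (-(n:ℂ)*Complex.I*((2*π:ℝ):ℂ)) = ((-n : ℤ):ℂ) * (2*(π:ℂ)*Complex.I) := by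
        push_cast; ring
      rw [heq2]
      exact Complex.exp_int_mul_two_pi_mul_I (-n)
    have hb2 : e n 0 = 1 := by
      show Complex.exp (-(n:ℂ)*Complex.I*((0:ℝ):ℂ)) = 1
      norm_num
    have hb3 : f (x, 2*π) = f (x, 0) := by
      have := hper x 0; rwa [zero_add] at this
    have hb4 : (∫ θ in (0:ℝ)..(2*π), (-(n:ℂ)*Complex.I * e n θ) * f (x,θ))
        = -(n:ℂ)*Complex.I * F n x := by
      rw [hFdef]
      rw [← intervalIntegral.integral_const_mul]
      exact intervalIntegral.integral_congr fun θ _ => by ring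
    rw [key, hb1, hb2, hb3, hb4]
    ring
  -- derivative of F
  have hFd : ∀ (n : ℤ) (x : ℝ),
      HasDerivAt (F n) (((s:ℂ)*((ρ x:ℂ)-(n:ℂ))) * F n x) x := by
    intro n x
    have h := aux_hasDerivAt_F f hf n x
    have heq : (∫ θ in (0:ℝ)..(2*π), e n θ * fderiv ℝ f (x,θ) (1,0))
        = ((s:ℂ)*((ρ x:ℂ)-(n:ℂ))) * F n x := by
      have hcongr : ∀ θ ∈ uIcc (0:ℝ) (2*π), e n θ * fderiv ℝ f (x,θ) (1,0)
          = (Complex.I*(s:ℂ))*(e n θ * fderiv ℝ f (x,θ) (0,1))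
            + ((s:ℂ)*(ρ x:ℂ))*(e n θ * f (x,θ)) := by
        intro θ _; rw [hg1 x θ]; ring
      have hI1 : IntervalIntegrable
          (fun θ : ℝ => (Complex.I*(s:ℂ))*(e n θ * fderiv ℝ f (x,θ) (0,1))) volume 0 (2*π) := by
        apply Continuous.intervalIntegrable
        exact continuous_const.mul ((aux_cont_e n).mul
          ((aux_cont_g2 f hf).comp (Continuous.prodMk_right x)))
      have hI2 : IntervalIntegrable
          (fun θ : ℝ => ((s:ℂ)*(ρ x:ℂ))*(e n θ * f (x,θ))) volume 0 (2*π) := by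
        apply Continuous.intervalIntegrable
        exact continuous_const.mul ((aux_cont_e n).mul (hfc.comp (Continuous.prodMk_right x)))
      have hadd : (∫ θ in (0:ℝ)..(2*π), ((Complex.I*(s:ℂ))*(e n θ * fderiv ℝ f (x,θ) (0,1))
            + ((s:ℂ)*(ρ x:ℂ))*(e n θ * f (x,θ))))
          = (∫ θ in (0:ℝ)..(2*π), (Complex.I*(s:ℂ))*(e n θ * fderiv ℝ f (x,θ) (0,1)))
            + ∫ θ in (0:ℝ)..(2*π), ((s:ℂ)*(ρ x:ℂ))*(e n θ * f (x,θ)) :=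
        intervalIntegral.integral_add hI1 hI2
      rw [intervalIntegral.integral_congr hcongr, hadd,
        intervalIntegral.integral_const_mul, intervalIntegral.integral_const_mul,
        hparts n x]
      rw [hFdef]
      ring_nf
      rw [Complex.I_sq]
      ring
    rwa [heq] at h
  -- the antiderivative of ρ
  set A : ℝ → ℝ := fun x => ∫ t in (0:ℝ)..x, ρ t with hAdef
  have hAd : ∀ x, HasDerivAt A (ρ x) x :=
    fun x => (hρc.integral_hasStrictDerivAt 0 x).hasDerivAt
  have hA0 : A 0 = 0 := intervalIntegral.integral_same
  -- solve the ODE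
  have hnormF : ∀ (n:ℤ) (x:ℝ), ‖F n x‖ = ‖F n 0‖ * Real.exp (s*(A x - n*x)) := by
    intro n x
    set E : ℝ → ℂ := fun y => Complex.exp (((-s*(A y - n*y) : ℝ) : ℂ)) with hEdef
    have hEd : ∀ y, HasDerivAt E (((-s*(ρ y - n) : ℝ) : ℂ) * E y) y := by
      intro y
      have h1 : HasDerivAt (fun y : ℝ => -s*(A y - n*y)) (-s*(ρ y - n)) y := by
        have hid : HasDerivAt (fun y : ℝ => (n:ℝ)*y) (n:ℝ) y := by
          simpa using (hasDerivAt_id y).const_mul (n:ℝ)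
        exact ((hAd y).sub hid).const_mul (-s)
      have h2 := (h1.ofReal_comp).cexp
      simpa [hEdef, mul_comm] using h2
    have hprod : ∀ y, HasDerivAt (fun y => F n y * E y) 0 y := by
      intro y
      have h := (hFd n y).mul (hEd y)
      refine h.congr_deriv ?_
      push_cast
      ring
    have hc := is_const_of_deriv_eq_zero (f := fun y => F n y * E y)
      (fun y => (hprod y).differentiableAt) (fun y => (hprod y).deriv) x 0
    have hE0 : E 0 = 1 := by
      rw [hEdef]
      norm_num [hA0]
    have hExnorm : ‖E x‖ = Real.exp (-s*(A x - n*x)) := by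
      rw [hEdef, Complex.norm_exp_ofReal]
    have hkey : ‖F n x‖ * Real.exp (-s*(A x - n*x)) = ‖F n 0‖ := by
      rw [← hExnorm, ← norm_mul, hc, hE0, mul_one]
    have h2 : -s*(A x - n*x) + s*(A x - n*x) = 0 := by ring
    rw [← hkey, mul_assoc, ← Real.exp_add, h2, Real.exp_zero, mul_one]
  -- L² bound on F via the slice integral
  have hFbound : ∀ (n:ℤ) (x:ℝ),
      2*‖F n x‖ - 2*π ≤ ∫ θ in (0:ℝ)..(2*π), ‖f (x,θ)‖^2 := by
    intro n x
    have h1 : ‖F n x‖ ≤ ∫ θ in (0:ℝ)..(2*π), ‖f (x,θ)‖ := by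
      refine le_trans (intervalIntegral.norm_integral_le_integral_norm twopi.le) ?_
      refine le_of_eq (intervalIntegral.integral_congr fun θ _ => ?_)
      rw [norm_mul, aux_norm_e n θ, one_mul]
    have h2 : (∫ θ in (0:ℝ)..(2*π), ‖f (x,θ)‖)
        ≤ ∫ θ in (0:ℝ)..(2*π), (1 + ‖f (x,θ)‖^2)/2 := by
      refine intervalIntegral.integral_mono_on twopi.le
        (((hfc.comp (Continuous.prodMk_right x)).norm).intervalIntegrable _ _)
        ((((continuous_const.add ((hfc.comp (Continuous.prodMk_right x)).norm.pow 2)).div_const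
          2)).intervalIntegrable _ _) fun θ _ => ?_
      nlinarith [sq_nonneg (1 - ‖f (x,θ)‖)]
    have h3 : (∫ θ in (0:ℝ)..(2*π), (1 + ‖f (x,θ)‖^2)/2)
        = π + (∫ θ in (0:ℝ)..(2*π), ‖f (x,θ)‖^2)/2 := by
      have hco : ∀ θ ∈ uIcc (0:ℝ) (2*π), (1 + ‖f (x,θ)‖^2)/2
          = 1/2 + (1/2)*‖f (x,θ)‖^2 := fun θ _ => by ring
      have hadd : (∫ θ in (0:ℝ)..(2*π), ((1:ℝ)/2 + (1/2)*‖f (x,θ)‖^2))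
          = (∫ _ in (0:ℝ)..(2*π), ((1:ℝ)/2))
            + ∫ θ in (0:ℝ)..(2*π), (1/2)*‖f (x,θ)‖^2 := by
        refine intervalIntegral.integral_add intervalIntegrable_const ?_
        apply Continuous.intervalIntegrable
        exact continuous_const.mul ((hfc.comp (Continuous.prodMk_right x)).norm.pow 2)
      rw [intervalIntegral.integral_congr hco, hadd,
        intervalIntegral.integral_const_mul, intervalIntegral.integral_const]
      simp only [smul_eq_mul, sub_zero]
      ring
    have := h1.trans (h2.trans_eq h3)
    linarith
  -- Fubini: the slice integral is integrable in x
  have hgInt : Integrable (fun x => ∫ θ in (0:ℝ)..(2*π), ‖f (x,θ)‖^2) volume := by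
    have h1 : Integrable (fun p : ℝ × ℝ => ‖f p‖^2)
        ((volume : Measure ℝ).prod (volume.restrict (Ico 0 (2*π)))) := by
      have h := hL2
      rw [IntegrableOn, MeasureTheory.Measure.volume_eq_prod,
        ← MeasureTheory.Measure.prod_restrict, Measure.restrict_univ] at h
      exact h
    have h2 := h1.integral_prod_left
    have heq : (fun x => ∫ θ in (0:ℝ)..(2*π), ‖f (x,θ)‖^2)
        = fun x => ∫ θ, ‖f (x,θ)‖^2 ∂(volume.restrict (Ico 0 (2*π))) := by
      funext x
      rw [intervalIntegral.integral_of_le twopi.le,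
        MeasureTheory.restrict_Ico_eq_restrict_Ioc]
    rw [heq]
    exact h2
  -- all Fourier coefficients vanish
  have hF0 : ∀ (n:ℤ) (x:ℝ), F n x = 0 := by
    have hF00 : ∀ n : ℤ, F n 0 = 0 := by
      intro n
      by_contra hne
      have hpos0 : 0 < ‖F n 0‖ := norm_pos_iff.2 hne
      rcases le_or_gt (n:ℝ) 0 with hn | hn
      · -- use growth as x → +∞
        set c : ℝ := ‖F n 0‖ * Real.exp (s*(A R - ε*R)) with hcdef
        have hcpos : 0 < c := by positivity
        refine aux_exp_contra _ hgInt (2*c) (s*ε) (2*π) R (by positivity) (by positivity)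
          (by positivity) ?_
        intro x hx
        have hAx : A x = A R + ε*(x-R) := by
          have h1 : (∫ t in (0:ℝ)..R, ρ t) + ∫ t in R..x, ρ t = ∫ t in (0:ℝ)..x, ρ t :=
            intervalIntegral.integral_add_adjacent_intervals
              (hρc.intervalIntegrable _ _) (hρc.intervalIntegrable _ _)
          have h2 : (∫ t in R..x, ρ t) = ε*(x-R) := by
            have hcg : ∀ t ∈ uIcc R x, ρ t = ε := by
              intro t ht
              rw [uIcc_of_le hx] at ht
              exact hpos t ht.1
            rw [intervalIntegral.integral_congr hcg, intervalIntegral.integral_const,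
              smul_eq_mul]
            ring
          rw [hAdef]
          dsimp only
          rw [← h1, h2]
        have hexp : s*(A R - ε*R) + (s*ε)*x ≤ s*(A x - n*x) := by
          have hnx : 0 ≤ -(n:ℝ)*x := mul_nonneg (neg_nonneg.2 hn) (le_trans hR.le hx)
          rw [hAx]
          nlinarith [hs.le]
        have hge : c * Real.exp ((s*ε)*x) ≤ ‖F n x‖ := by
          rw [hnormF n x, hcdef, mul_assoc, ← Real.exp_add]
          exact mul_le_mul_of_nonneg_left (Real.exp_le_exp.2 hexp) hpos0.le
        have hb := hFbound n x
        linarith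
      · -- use growth as x → −∞
        set c : ℝ := ‖F n 0‖ * Real.exp (s*(A (-R) - ε*R)) with hcdef
        have hcpos : 0 < c := by positivity
        have hgneg : Integrable (fun y => ∫ θ in (0:ℝ)..(2*π), ‖f (-y,θ)‖^2) volume :=
          ((Measure.measurePreserving_neg (volume : Measure ℝ)).integrable_comp_emb
            (Homeomorph.neg ℝ).toMeasurableEquiv.measurableEmbedding).2 hgInt
        refine aux_exp_contra _ hgneg (2*c) (s*(ε+n)) (2*π) R (by positivity)
          (by positivity) (by positivity) ?_
        intro y hy
        set x : ℝ := -y with hxdef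
        have hxR : x ≤ -R := by rw [hxdef]; linarith
        have hAx : A x = A (-R) - ε*(x+R) := by
          have h1 : (∫ t in (0:ℝ)..(-R), ρ t) + ∫ t in (-R)..x, ρ t = ∫ t in (0:ℝ)..x, ρ t :=
            intervalIntegral.integral_add_adjacent_intervals
              (hρc.intervalIntegrable _ _) (hρc.intervalIntegrable _ _)
          have h2 : (∫ t in (-R)..x, ρ t) = -ε*(x+R) := by
            have hcg : ∀ t ∈ uIcc (-R) x, ρ t = -ε := by
              intro t ht
              rw [uIcc_comm, uIcc_of_le hxR] at ht
              exact hneg t ht.2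
            rw [intervalIntegral.integral_congr hcg, intervalIntegral.integral_const,
              smul_eq_mul]
            ring
          rw [hAdef]
          dsimp only
          rw [← h1, h2]
          ring
        have hexp : s*(A (-R) - ε*R) + (s*(ε+n))*y ≤ s*(A x - n*x) := by
          rw [hAx, hxdef]
          nlinarith [hs.le]
        have hge : c * Real.exp ((s*(ε+n))*y) ≤ ‖F n x‖ := by
          rw [hnormF n x, hcdef, mul_assoc, ← Real.exp_add]
          exact mul_le_mul_of_nonneg_left (Real.exp_le_exp.2 hexp) hpos0.le
        have hb := hFbound n x
        linarith
    intro n x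
    have h := hnormF n x
    rw [hF00 n, norm_zero, zero_mul] at h
    exact norm_eq_zero.1 h
  -- conclude via completeness of the Fourier basis
  intro x θ
  haveI : Fact ((0:ℝ) < 2*π) := ⟨twopi⟩
  set g : ℝ → ℂ := fun θ' => f (x, θ') with hgdef
  have hgper : g 0 = g (2*π) := by
    have h := hper x 0; rw [zero_add] at h; exact h.symm
  have hgc : Continuous g := hfc.comp (Continuous.prodMk_right x)
  set G : C(AddCircle (2*π), ℂ) :=
    ⟨AddCircle.liftIco (2*π) 0 g, AddCircle.liftIco_zero_continuous hgper hgc.continuousOn⟩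
    with hGdef
  have hGcoe : (G : AddCircle (2*π) → ℂ) = AddCircle.liftIco (2*π) 0 g := rfl
  have hcoeff : ∀ i : ℤ, fourierCoeff (G : AddCircle (2*π) → ℂ) i = 0 := by
    intro i
    rw [hGcoe, fourierCoeff_liftIco_eq g i, fourierCoeffOn_eq_integral]
    have h2 : (∫ θ' in (0:ℝ)..(0+2*π),
        (fourier (-i) (θ' : AddCircle (0+2*π-0))) • g θ') = 0 := by
      have h3 := hF0 i x
      rw [hFdef] at h3
      have h4 : ∀ θ' ∈ uIcc (0:ℝ) (0+2*π),
          (fourier (-i) (θ' : AddCircle (0+2*π-0))) • g θ' = e i θ' * f (x, θ') := by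
        intro θ' _
        rw [smul_eq_mul]
        congr 1
        rw [fourier_coe_apply]
        show Complex.exp _ = Complex.exp _
        congr 1
        have hpi : (π:ℂ) ≠ 0 := by
          simpa using Complex.ofReal_ne_zero.2 Real.pi_ne_zero
        push_cast
        field_simp
        ring
      rw [intervalIntegral.integral_congr h4]
      simpa using h3
    rw [h2, smul_zero]
  have hsum : Summable (fourierCoeff (G : AddCircle (2*π) → ℂ)) := by
    rw [show (fourierCoeff (G : AddCircle (2*π) → ℂ)) = fun _ => 0 from funext hcoeff]
    exact summable_zero
  have hs1 := hasSum_fourier_series_of_summable hsum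
  have hs2 : HasSum (fun i : ℤ => fourierCoeff (G : AddCircle (2*π) → ℂ) i • fourier i)
      (0 : C(AddCircle (2*π), ℂ)) := by
    convert hasSum_zero with i
    rw [hcoeff i, zero_smul]
  have hG0 : G = 0 := hs1.unique hs2
  have hper2 : Function.Periodic g (2*π) := fun θ' => hper x θ'
  obtain ⟨θ', hθ'mem, hθ'⟩ := hper2.exists_mem_Ico₀ twopi θ
  have hlift : AddCircle.liftIco (2*π) 0 g (θ' : AddCircle (2*π)) = g θ' :=
    AddCircle.liftIco_coe_apply (by rwa [zero_add])
  have hzero : AddCircle.liftIco (2*π) 0 g (θ' : AddCircle (2*π)) = 0 := by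
    rw [← hGcoe, hG0]
    rfl
  show g θ = 0
  rw [hθ', ← hlift, hzero]
end

section
/- Fix real numbers ε with 0 < ε < 1, R > 0, and s > 0. Let ρ : ℝ → ℝ be a smooth monotone decreasing function with ρ(0) = 0, ρ(x) = −ε for all x ≥ R, and ρ(x) = ε for all x ≤ −R. Let f : ℝ × ℝ → ℂ be infinitely differentiable with f(x, θ + 2π) = f(x, θ) for all (x, θ), square-integrable on ℝ × [0, 2π), and satisfying ∂f/∂x + i·s·∂f/∂θ + s·ρ(x)·f = 0 everywhere. Then f is identically zero. -/
open Real MeasureTheory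


lemma BS_norm_E (n : ℤ) (θ : ℝ) : ‖Complex.exp (-(n:ℂ) * Complex.I * θ)‖ = 1 := by
  have h : -(n:ℂ) * Complex.I * θ = ((-(n:ℝ) * θ : ℝ) : ℂ) * Complex.I := by push_cast; ring
  rw [h, Complex.norm_exp_ofReal_mul_I]

lemma BS_cont_E (n : ℤ) : Continuous (fun θ : ℝ => Complex.exp (-(n:ℂ) * Complex.I * θ)) :=
  Complex.continuous_exp.comp (continuous_const.mul Complex.continuous_ofReal)

lemma BS_expderiv (n : ℤ) (θ : ℝ) :
    HasDerivAt (fun t : ℝ => Complex.exp (-(n:ℂ) * Complex.I * t))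
      (-(n:ℂ) * Complex.I * Complex.exp (-(n:ℂ) * Complex.I * θ)) θ := by
  have h0 : HasDerivAt (fun t : ℝ => ((t : ℝ) : ℂ)) 1 θ := by
    simpa using (hasDerivAt_id θ).ofReal_comp
  have h1 := h0.const_mul (-(n:ℂ) * Complex.I)
  have h2 := h1.cexp
  simpa [mul_comm] using h2

lemma BS_not_int_Ici {G : ℝ → ℝ} (hG : Integrable G) (T₀ : ℝ)
    (h : ∀ x, T₀ ≤ x → 1 ≤ G x) : False := by
  have h1 : Integrable (fun _ : ℝ => (1:ℝ)) (volume.restrict (Set.Ici T₀)) := by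
    refine Integrable.mono' (hG.restrict (s := Set.Ici T₀)) aestronglyMeasurable_const ?_
    filter_upwards [ae_restrict_mem measurableSet_Ici] with x hx
    simpa using h x hx
  rcases (integrable_const_iff).mp h1 with h2 | h2
  · norm_num at h2
  · have h3 := h2.measure_univ_lt_top; simp [Measure.restrict_apply_univ, Real.volume_Ici] at h3

lemma BS_not_int_Iic {G : ℝ → ℝ} (hG : Integrable G) (T₀ : ℝ)
    (h : ∀ x, x ≤ T₀ → 1 ≤ G x) : False := by
  have h1 : Integrable (fun _ : ℝ => (1:ℝ)) (volume.restrict (Set.Iic T₀)) := by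
    refine Integrable.mono' (hG.restrict (s := Set.Iic T₀)) aestronglyMeasurable_const ?_
    filter_upwards [ae_restrict_mem measurableSet_Iic] with x hx
    simpa using h x hx
  rcases (integrable_const_iff).mp h1 with h2 | h2
  · norm_num at h2
  · have h3 := h2.measure_univ_lt_top; simp [Measure.restrict_apply_univ, Real.volume_Iic] at h3

lemma BS_fourier (g : ℝ → ℂ) (hg : Continuous g) (hper : Function.Periodic g (2*π))
    (hcoeff : ∀ n : ℤ, ∫ θ in (0:ℝ)..(2*π), Complex.exp (-(n:ℂ)*Complex.I*θ) * g θ = 0) :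
    ∀ θ : ℝ, g θ = 0 := by
  have h2π : (0:ℝ) < 2*π := by linarith [Real.pi_pos]
  haveI : Fact (0 < 2*π) := ⟨h2π⟩
  set gq : AddCircle (2*π) → ℂ := hper.lift with hgq
  have hgqc : Continuous gq := by
    rw [(QuotientAddGroup.isQuotientMap_mk _).continuous_iff]
    exact hg
  have hco : ∀ n : ℤ, fourierCoeff gq n = 0 := by
    intro n
    rw [fourierCoeff_eq_intervalIntegral gq n 0]
    have : ∫ x in (0:ℝ)..(0 + 2*π), (fourier (-n) (x : AddCircle (2*π)) : ℂ) • gq (x : AddCircle (2*π))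
        = ∫ θ in (0:ℝ)..(2*π), Complex.exp (-(n:ℂ)*Complex.I*θ) * g θ := by
      rw [zero_add]
      refine intervalIntegral.integral_congr fun θ _ => ?_
      rw [fourier_coe_apply]
      have harg : 2 * ↑π * Complex.I * (↑(-n : ℤ)) * ↑θ / ↑(2*π) = -(n:ℂ)*Complex.I*θ := by
        have hπ : ((2*π : ℝ) : ℂ) ≠ 0 := by
          exact_mod_cast ne_of_gt h2π
        rw [div_eq_iff hπ]
        push_cast
        ring
      rw [harg]
      simp [hgq, smul_eq_mul]
    rw [this, hcoeff n, smul_zero]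
  set G : C(AddCircle (2*π), ℂ) := ⟨gq, hgqc⟩ with hG
  have hsummable : Summable (fourierCoeff (G : AddCircle (2*π) → ℂ)) := by
    have : (fourierCoeff (G : AddCircle (2*π) → ℂ)) = fun _ => 0 := funext fun n => hco n
    rw [this]; exact summable_zero
  intro θ
  have hp := has_pointwise_sum_fourier_series_of_summable hsummable (θ : AddCircle (2*π))
  have hzero : HasSum (fun i : ℤ => fourierCoeff (G : AddCircle (2*π) → ℂ) i • fourier i (θ : AddCircle (2*π))) 0 := by
    have : (fun i : ℤ => fourierCoeff (G : AddCircle (2*π) → ℂ) i • fourier i (θ : AddCircle (2*π))) = fun _ => 0 := by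
      funext i
      have h0 : fourierCoeff (G : AddCircle (2*π) → ℂ) i = 0 := hco i
      rw [h0]; simp
    rw [this]; exact hasSum_zero
  have := hp.unique hzero
  simpa [hG, hgq] using this

lemma BS_mode (ε R s : ℝ) (hε : 0 < ε) (hε1 : ε < 1) (hR : 0 < R) (hs : 0 < s)
    (ρ : ℝ → ℝ) (hρc : Continuous ρ)
    (hpos : ∀ x : ℝ, R ≤ x → ρ x = -ε) (hneg : ∀ x : ℝ, x ≤ -R → ρ x = ε)
    (n : ℤ) (c : ℝ → ℂ) (G : ℝ → ℝ)
    (hder : ∀ x, HasDerivAt c (((s:ℂ) * ((n:ℂ) - (ρ x:ℂ))) * c x) x)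
    (hGint : Integrable G)
    (hbound : ∀ x, ‖c x‖ ≤ G x / 2 + π) :
    ∀ x, c x = 0 := by
  set Φ : ℝ → ℝ := fun x => s * ((n:ℝ) * x - ∫ t in (0:ℝ)..x, ρ t) with hΦdef
  have hΦd : ∀ x, HasDerivAt Φ (s * ((n:ℝ) - ρ x)) x := by
    intro x
    have h1 : HasDerivAt (fun y => ∫ t in (0:ℝ)..y, ρ t) (ρ x) x :=
      (hρc.integral_hasStrictDerivAt 0 x).hasDerivAt
    have h2 : HasDerivAt (fun y : ℝ => (n:ℝ) * y) (n:ℝ) x := by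
      simpa using (hasDerivAt_id x).const_mul (n:ℝ)
    exact HasDerivAt.const_mul s (h2.sub h1)
  have hh : ∀ x, HasDerivAt (fun y => c y * Complex.exp (-(Φ y : ℂ))) 0 x := by
    intro x
    have hΦc : HasDerivAt (fun y => ((Φ y : ℝ) : ℂ)) ((s * ((n:ℝ) - ρ x) : ℝ) : ℂ) x :=
      (hΦd x).ofReal_comp
    have hexp : HasDerivAt (fun y => Complex.exp (-(Φ y : ℂ))) _ x := (hΦc.neg).cexp
    have hmul : HasDerivAt (fun y => c y * Complex.exp (-(Φ y : ℂ))) _ x := (hder x).mul hexp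
    convert hmul using 1
    push_cast [Pi.neg_apply]
    ring
  have hconst : ∀ x, c x * Complex.exp (-(Φ x : ℂ)) = c 0 * Complex.exp (-(Φ 0 : ℂ)) :=
    fun x => is_const_of_deriv_eq_zero (fun y => (hh y).differentiableAt)
      (fun y => (hh y).deriv) x 0
  have hΦ0 : Φ 0 = 0 := by simp [hΦdef]
  have hval : ∀ x, c x = c 0 * Complex.exp ((Φ x : ℂ)) := by
    intro x
    have h := hconst x
    rw [hΦ0] at h
    simp only [Complex.ofReal_zero, neg_zero, Complex.exp_zero, mul_one] at h
    calc c x = c x * Complex.exp (-(Φ x : ℂ)) * Complex.exp ((Φ x : ℂ)) := by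
          rw [mul_assoc, ← Complex.exp_add]; simp
      _ = c 0 * Complex.exp ((Φ x : ℂ)) := by rw [h]
  have hnorm : ∀ x, ‖c x‖ = ‖c 0‖ * Real.exp (Φ x) := by
    intro x
    rw [hval x, norm_mul]
    congr 1
    rw [Complex.norm_exp]
    simp
  suffices h0 : c 0 = 0 by
    intro x; rw [hval x, h0, zero_mul]
  by_contra hc0
  have hK : 0 < ‖c 0‖ := norm_pos_iff.mpr hc0
  have hint : ∀ a b : ℝ, IntervalIntegrable ρ volume a b := fun a b => hρc.intervalIntegrable a b
  have hπ := Real.pi_pos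
  rcases le_or_gt 0 (n:ℝ) with hn | hn
  · -- positive modes: blow-up at +∞
    have hΦR : ∀ x, R ≤ x → Φ x = Φ R + s * ((n:ℝ) + ε) * (x - R) := by
      intro x hx
      have hsplit : ((∫ t in (0:ℝ)..R, ρ t) + ∫ t in R..x, ρ t) = ∫ t in (0:ℝ)..x, ρ t :=
        intervalIntegral.integral_add_adjacent_intervals (hint 0 R) (hint R x)
      have hcst : (∫ t in R..x, ρ t) = -ε * (x - R) := by
        have he : ∀ t ∈ Set.uIcc R x, ρ t = -ε := by
          intro t ht
          rw [Set.uIcc_of_le hx] at ht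
          exact hpos t ht.1
        rw [intervalIntegral.integral_congr he, intervalIntegral.integral_const]
        simp [smul_eq_mul]; ring
      simp only [hΦdef]
      rw [← hsplit, hcst]; ring
    set KE := ‖c 0‖ * Real.exp (Φ R) with hKE
    have hKEpos : 0 < KE := by positivity
    set L := Real.log ((2*π+1)/KE) with hL
    refine BS_not_int_Ici hGint (max R (R + L / (s*ε))) fun x hx => ?_
    have hxR : R ≤ x := le_trans (le_max_left _ _) hx
    have hsε : 0 < s * ε := mul_pos hs hε
    have hlog : L ≤ s * ε * (x - R) := by
      have h1 : R + L / (s*ε) ≤ x := le_trans (le_max_right _ _) hx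
      have h2 : L / (s*ε) ≤ x - R := by linarith
      calc L = L / (s*ε) * (s*ε) := by field_simp
        _ ≤ (x - R) * (s*ε) := by
            exact mul_le_mul_of_nonneg_right h2 (le_of_lt hsε)
        _ = s * ε * (x - R) := by ring
    have hexp : (2*π+1)/KE ≤ Real.exp (s*ε*(x-R)) := by
      have hpos' : 0 < (2*π+1)/KE := by positivity
      calc (2*π+1)/KE = Real.exp L := (Real.exp_log hpos').symm
        _ ≤ _ := Real.exp_le_exp.mpr hlog
    have hcx : 2*π+1 ≤ ‖c x‖ := by
      have hmono : Real.exp (Φ R) * Real.exp (s*ε*(x-R)) ≤ Real.exp (Φ x) := by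
        rw [← Real.exp_add]
        apply Real.exp_le_exp.mpr
        rw [hΦR x hxR]
        nlinarith [mul_nonneg (mul_nonneg hs.le hn) (sub_nonneg.mpr hxR)]
      have h3 := mul_le_mul_of_nonneg_left hexp (le_of_lt hKEpos)
      rw [mul_div_cancel₀ _ (ne_of_gt hKEpos)] at h3
      have h4 : KE * Real.exp (s*ε*(x-R)) ≤ ‖c 0‖ * Real.exp (Φ x) := by
        rw [hKE, mul_assoc]
        exact mul_le_mul_of_nonneg_left hmono (norm_nonneg _)
      rw [hnorm x]
      linarith
    have hb := hbound x
    linarith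
  · -- negative modes: blow-up at -∞
    have hn1 : (n:ℝ) ≤ -1 := by
      have : n < 0 := by exact_mod_cast hn
      have : n ≤ -1 := by omega
      exact_mod_cast this
    have hΦL : ∀ x, x ≤ -R → Φ x = Φ (-R) + s * ((n:ℝ) - ε) * (x + R) := by
      intro x hx
      have hsplit : ((∫ t in (0:ℝ)..(-R), ρ t) + ∫ t in (-R)..x, ρ t) = ∫ t in (0:ℝ)..x, ρ t :=
        intervalIntegral.integral_add_adjacent_intervals (hint 0 (-R)) (hint (-R) x)
      have hcst : (∫ t in (-R)..x, ρ t) = ε * (x + R) := by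
        have he : ∀ t ∈ Set.uIcc (-R) x, ρ t = ε := by
          intro t ht
          rw [Set.uIcc_of_ge hx] at ht
          exact hneg t ht.2
        rw [intervalIntegral.integral_congr he, intervalIntegral.integral_const]
        simp [smul_eq_mul]; ring
      simp only [hΦdef]
      rw [← hsplit, hcst]; ring
    set KE := ‖c 0‖ * Real.exp (Φ (-R)) with hKE
    have hKEpos : 0 < KE := by positivity
    set L := Real.log ((2*π+1)/KE) with hL
    refine BS_not_int_Iic hGint (min (-R) (-R - L / s)) fun x hx => ?_
    have hxR : x ≤ -R := le_trans hx (min_le_left _ _)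
    have hlog : L ≤ s * (-R - x) := by
      have h1 : x ≤ -R - L / s := le_trans hx (min_le_right _ _)
      have h2 : L / s ≤ -R - x := by linarith
      calc L = L / s * s := by field_simp
        _ ≤ (-R - x) * s := mul_le_mul_of_nonneg_right h2 (le_of_lt hs)
        _ = s * (-R - x) := by ring
    have hexp : (2*π+1)/KE ≤ Real.exp (s*(-R-x)) := by
      have hpos' : 0 < (2*π+1)/KE := by positivity
      calc (2*π+1)/KE = Real.exp L := (Real.exp_log hpos').symm
        _ ≤ _ := Real.exp_le_exp.mpr hlog
    have hcx : 2*π+1 ≤ ‖c x‖ := by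
      have hmono : Real.exp (Φ (-R)) * Real.exp (s*(-R-x)) ≤ Real.exp (Φ x) := by
        rw [← Real.exp_add]
        apply Real.exp_le_exp.mpr
        rw [hΦL x hxR]
        nlinarith [mul_nonneg (mul_nonneg hs.le (by linarith : (0:ℝ) ≤ ε - (n:ℝ) - 1))
          (by linarith : (0:ℝ) ≤ -R - x)]
      have h3 := mul_le_mul_of_nonneg_left hexp (le_of_lt hKEpos)
      rw [mul_div_cancel₀ _ (ne_of_gt hKEpos)] at h3
      have h4 : KE * Real.exp (s*(-R-x)) ≤ ‖c 0‖ * Real.exp (Φ x) := by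
        rw [hKE, mul_assoc]
        exact mul_le_mul_of_nonneg_left hmono (norm_nonneg _)
      rw [hnorm x]
      linarith
    have hb := hbound x
    linarith

/-- BS⁻ model: every smooth, `2π`-periodic, square-integrable solution of the even
equation `∂f/∂x + i·s·∂f/∂θ + s·ρ(x)·f = 0` vanishes identically. -/
theorem BSminus_even_kernel_zero (ε R s : ℝ) (hε : 0 < ε) (hε1 : ε < 1)
    (hR : 0 < R) (hs : 0 < s)
    (ρ : ℝ → ℝ) (hρ : ContDiff ℝ (⊤ : ℕ∞) ρ) (hanti : Antitone ρ) (h0 : ρ 0 = 0)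
    (hpos : ∀ x : ℝ, R ≤ x → ρ x = -ε) (hneg : ∀ x : ℝ, x ≤ -R → ρ x = ε)
    (f : ℝ × ℝ → ℂ) (hf : ContDiff ℝ (⊤ : ℕ∞) f)
    (hper : ∀ x θ : ℝ, f (x, θ + 2 * π) = f (x, θ))
    (hL2 : IntegrableOn (fun p => ‖f p‖ ^ 2) (Set.univ ×ˢ Set.Ico 0 (2 * π)))
    (hPDE : ∀ x θ : ℝ, deriv (fun x' => f (x', θ)) x
        + Complex.I * (s : ℂ) * deriv (fun θ' => f (x, θ')) θ
        + (s : ℂ) * (ρ x : ℂ) * f (x, θ) = 0) :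
    ∀ x θ : ℝ, f (x, θ) = 0 := by
  have hπ := Real.pi_pos
  have h2π : (0:ℝ) < 2*π := by linarith
  have hfd : Differentiable ℝ f := hf.differentiable (by simp)
  have hDcont : Continuous (fderiv ℝ f) := hf.continuous_fderiv (by simp)
  have hfxc : Continuous (fun p : ℝ×ℝ => fderiv ℝ f p (1,0)) := hDcont.clm_apply continuous_const
  have hfθc : Continuous (fun p : ℝ×ℝ => fderiv ℝ f p (0,1)) := hDcont.clm_apply continuous_const
  have hx : ∀ x θ : ℝ, HasDerivAt (fun x' => f (x',θ)) (fderiv ℝ f (x,θ) (1,0)) x := by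
    intro x θ
    have h2 : HasDerivAt (fun x' : ℝ => ((x' : ℝ), θ)) ((1:ℝ),(0:ℝ)) x :=
      (hasDerivAt_id x).prodMk (hasDerivAt_const x θ)
    exact (hfd (x,θ)).hasFDerivAt.comp_hasDerivAt x h2
  have hy : ∀ x θ : ℝ, HasDerivAt (fun θ' => f (x,θ')) (fderiv ℝ f (x,θ) (0,1)) θ := by
    intro x θ
    have h2 : HasDerivAt (fun θ' : ℝ => (x, θ')) ((0:ℝ),(1:ℝ)) θ :=
      (hasDerivAt_const θ x).prodMk (hasDerivAt_id θ)
    exact (hfd (x,θ)).hasFDerivAt.comp_hasDerivAt θ h2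
  have hPDE' : ∀ x θ : ℝ, fderiv ℝ f (x,θ) (1,0)
      = -(Complex.I * s * fderiv ℝ f (x,θ) (0,1)) - s * (ρ x : ℂ) * f (x,θ) := by
    intro x θ
    have h := hPDE x θ
    rw [(hx x θ).deriv, (hy x θ).deriv] at h
    linear_combination h
  have hcontf : ∀ y : ℝ, Continuous fun θ => f (y, θ) :=
    fun y => hf.continuous.comp (Continuous.prodMk_right y)
  have hcontfx : ∀ y : ℝ, Continuous fun θ => fderiv ℝ f (y, θ) (1,0) :=
    fun y => hfxc.comp (Continuous.prodMk_right y)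
  have hcontfθ : ∀ y : ℝ, Continuous fun θ => fderiv ℝ f (y, θ) (0,1) :=
    fun y => hfθc.comp (Continuous.prodMk_right y)
  -- Fourier coefficient functions
  set c : ℤ → ℝ → ℂ :=
    fun n y => ∫ θ in (0:ℝ)..(2*π), Complex.exp (-(n:ℂ) * Complex.I * θ) * f (y, θ) with hcdef
  -- Step B : integration by parts
  have hB : ∀ (n : ℤ) (x₀ : ℝ),
      (∫ t in (0:ℝ)..(2*π), Complex.exp (-(n:ℂ) * Complex.I * t) * fderiv ℝ f (x₀,t) (0,1))
        = (n:ℂ) * Complex.I * c n x₀ := by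
    intro n x₀
    have hu : ∀ t ∈ Set.uIcc (0:ℝ) (2*π),
        HasDerivAt (fun t : ℝ => Complex.exp (-(n:ℂ) * Complex.I * t))
          (-(n:ℂ) * Complex.I * Complex.exp (-(n:ℂ) * Complex.I * t)) t :=
      fun t _ => BS_expderiv n t
    have hv : ∀ t ∈ Set.uIcc (0:ℝ) (2*π),
        HasDerivAt (fun θ => f (x₀,θ)) (fderiv ℝ f (x₀,t) (0,1)) t := fun t _ => hy x₀ t
    have hiu : IntervalIntegrable
        (fun t : ℝ => -(n:ℂ) * Complex.I * Complex.exp (-(n:ℂ) * Complex.I * t)) volume 0 (2*π) :=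
      (continuous_const.mul (BS_cont_E n)).intervalIntegrable 0 (2*π)
    have hiv : IntervalIntegrable (fun t => fderiv ℝ f (x₀,t) (0,1)) volume 0 (2*π) :=
      (hcontfθ x₀).intervalIntegrable 0 (2*π)
    have key := intervalIntegral.integral_mul_deriv_eq_deriv_mul hu hv hiu hiv
    have hE2π : Complex.exp (-(n:ℂ) * Complex.I * ((2*π : ℝ):ℂ)) = 1 := by
      have harg : -(n:ℂ) * Complex.I * ((2*π : ℝ):ℂ) = ((-n : ℤ):ℂ) * (2*(π:ℂ)*Complex.I) := by
        push_cast; ring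
      rw [harg, Complex.exp_int_mul_two_pi_mul_I]
    have hE0 : Complex.exp (-(n:ℂ) * Complex.I * ((0:ℝ):ℂ)) = 1 := by simp
    have hfper : f (x₀, 2*π) = f (x₀, 0) := by simpa using hper x₀ 0
    rw [key, hE2π, hE0, hfper]
    have hpull : (∫ t in (0:ℝ)..(2*π),
        -(n:ℂ) * Complex.I * Complex.exp (-(n:ℂ) * Complex.I * t) * f (x₀,t))
        = (-(n:ℂ) * Complex.I) * ∫ t in (0:ℝ)..(2*π),
            Complex.exp (-(n:ℂ) * Complex.I * t) * f (x₀,t) := by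
      rw [← intervalIntegral.integral_const_mul]
      congr 1; funext t; ring
    rw [hpull]
    simp only [hcdef]
    ring
  -- Step A + C : the ODE for each mode
  have hODE : ∀ (n : ℤ) (x₀ : ℝ),
      HasDerivAt (c n) (((s:ℂ) * ((n:ℂ) - (ρ x₀ : ℂ))) * c n x₀) x₀ := by
    intro n x₀
    obtain ⟨M, hM⟩ := (IsCompact.prod (isCompact_Icc (a := x₀-1) (b := x₀+1))
        (isCompact_Icc (a := (0:ℝ)) (b := 2*π))).exists_bound_of_continuousOn hfxc.continuousOn
    have h_bound : ∀ᵐ t ∂(volume : Measure ℝ), t ∈ Set.uIoc (0:ℝ) (2*π) →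
        ∀ x ∈ Metric.ball x₀ 1,
          ‖Complex.exp (-(n:ℂ) * Complex.I * t) * fderiv ℝ f (x,t) (1,0)‖ ≤ M := by
      refine ae_of_all _ fun t ht x hxb => ?_
      rw [norm_mul, BS_norm_E, one_mul]
      apply hM
      have hd : |x - x₀| < 1 := by
        have := Metric.mem_ball.mp hxb; rwa [Real.dist_eq] at this
      rw [Set.uIoc_of_le h2π.le] at ht
      have h1 := abs_lt.mp hd
      exact Set.mk_mem_prod ⟨by linarith [h1.1], by linarith [h1.2]⟩ ⟨ht.1.le, ht.2⟩
    have hA := (intervalIntegral.hasDerivAt_integral_of_dominated_loc_of_deriv_le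
      (F := fun x t => Complex.exp (-(n:ℂ) * Complex.I * t) * f (x, t))
      (F' := fun x t => Complex.exp (-(n:ℂ) * Complex.I * t) * fderiv ℝ f (x,t) (1,0))
      (bound := fun _ => M) (Metric.ball_mem_nhds x₀ one_pos)
      (Filter.Eventually.of_forall fun x => ((BS_cont_E n).mul (hcontf x)).aestronglyMeasurable)
      (((BS_cont_E n).mul (hcontf x₀)).intervalIntegrable 0 (2*π))
      (((BS_cont_E n).mul (hcontfx x₀)).aestronglyMeasurable)
      h_bound
      intervalIntegrable_const
      (ae_of_all _ fun t _ x _ =>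
        HasDerivAt.const_mul (Complex.exp (-(n:ℂ) * Complex.I * t)) (hx x t))).2
    have hval : (∫ t in (0:ℝ)..(2*π), Complex.exp (-(n:ℂ) * Complex.I * t) * fderiv ℝ f (x₀,t) (1,0))
        = ((s:ℂ) * ((n:ℂ) - (ρ x₀ : ℂ))) * c n x₀ := by
      have hfxeq : (fun t : ℝ => Complex.exp (-(n:ℂ) * Complex.I * t) * fderiv ℝ f (x₀,t) (1,0))
          = fun t : ℝ => (-(Complex.I * s)) * (Complex.exp (-(n:ℂ) * Complex.I * t) * fderiv ℝ f (x₀,t) (0,1))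
            + (-(s * (ρ x₀:ℂ))) * (Complex.exp (-(n:ℂ) * Complex.I * t) * f (x₀,t)) := by
        funext t; rw [hPDE' x₀ t]; ring
      rw [hfxeq, intervalIntegral.integral_add
          (f := fun t : ℝ => (-(Complex.I * s)) * (Complex.exp (-(n:ℂ) * Complex.I * t) * fderiv ℝ f (x₀,t) (0,1)))
          (g := fun t : ℝ => (-(s * (ρ x₀:ℂ))) * (Complex.exp (-(n:ℂ) * Complex.I * t) * f (x₀,t)))
          ((continuous_const.mul ((BS_cont_E n).mul (hcontfθ x₀))).intervalIntegrable 0 (2*π))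
          ((continuous_const.mul ((BS_cont_E n).mul (hcontf x₀))).intervalIntegrable 0 (2*π)),
        intervalIntegral.integral_const_mul, intervalIntegral.integral_const_mul, hB]
      simp only [hcdef]
      ring_nf
      rw [Complex.I_sq]
      ring
    rw [hval] at hA
    exact hA
  -- Step E : the L² majorant
  set G : ℝ → ℝ := fun x => ∫ θ in (0:ℝ)..(2*π), ‖f (x,θ)‖^2 with hGdef
  have hGint : Integrable G := by
    have hL2' : Integrable (fun p : ℝ×ℝ => ‖f p‖^2)
        ((volume : Measure ℝ).prod (volume.restrict (Set.Ico 0 (2*π)))) := by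
      have h := hL2
      rw [IntegrableOn, show (volume : Measure (ℝ×ℝ)).restrict (Set.univ ×ˢ Set.Ico 0 (2*π))
          = (volume : Measure ℝ).prod (volume.restrict (Set.Ico 0 (2*π))) from by
        rw [Measure.volume_eq_prod, ← Measure.prod_restrict, Measure.restrict_univ]] at h
      exact h
    have h1 := hL2'.integral_prod_left
    have h2 : G = fun x => ∫ y, ‖f (x,y)‖^2 ∂(volume.restrict (Set.Ico 0 (2*π))) := by
      funext x
      simp only [hGdef]
      rw [intervalIntegral.integral_of_le h2π.le]
      rw [integral_Ioc_eq_integral_Ioo, ← integral_Ico_eq_integral_Ioo]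
    rw [h2]
    exact h1
  have hbound : ∀ (n : ℤ) (x : ℝ), ‖c n x‖ ≤ G x / 2 + π := by
    intro n x
    have h1 : ‖c n x‖ ≤ ∫ θ in (0:ℝ)..(2*π), ‖Complex.exp (-(n:ℂ) * Complex.I * θ) * f (x,θ)‖ := by
      simp only [hcdef]
      exact intervalIntegral.norm_integral_le_integral_norm h2π.le
    have h2 : (∫ θ in (0:ℝ)..(2*π), ‖Complex.exp (-(n:ℂ) * Complex.I * θ) * f (x,θ)‖)
        = ∫ θ in (0:ℝ)..(2*π), ‖f (x,θ)‖ := by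
      congr 1; funext θ; rw [norm_mul, BS_norm_E, one_mul]
    have h3 : (∫ θ in (0:ℝ)..(2*π), ‖f (x,θ)‖)
        ≤ ∫ θ in (0:ℝ)..(2*π), (‖f (x,θ)‖^2 + 1)/2 := by
      apply intervalIntegral.integral_mono_on h2π.le
        ((hcontf x).norm.intervalIntegrable 0 (2*π))
        ((((((hcontf x).norm.pow 2)).add continuous_const).div_const 2).intervalIntegrable 0 (2*π))
      intro t _
      simp only [Pi.add_apply, Pi.pow_apply]
      nlinarith [sq_nonneg (‖f (x,t)‖ - 1)]
    have h4 : (∫ θ in (0:ℝ)..(2*π), (‖f (x,θ)‖^2 + 1)/2) = G x / 2 + π := by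
      rw [intervalIntegral.integral_div, intervalIntegral.integral_add (f := fun θ => ‖f (x,θ)‖^2) (g := fun _ => 1)
          (((hcontf x).norm.pow 2).intervalIntegrable 0 (2*π))
          (intervalIntegrable_const),
        intervalIntegral.integral_const]
      simp only [hGdef, smul_eq_mul, sub_zero, mul_one]
      ring
    linarith [h1, h2 ▸ h1]
  have hczero : ∀ (n : ℤ) (x : ℝ), c n x = 0 := fun n =>
    BS_mode ε R s hε hε1 hR hs ρ hρ.continuous hpos hneg n (c n) G (hODE n) hGint (hbound n)
  intro x θ
  exact BS_fourier (fun θ => f (x,θ)) (hcontf x) (fun θ' => hper x θ')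
    (fun n => hczero n x) θ
end

section
/- Fix real numbers ε with 0 < ε < 1, R > 0, and s > 0. Let ρ : ℝ → ℝ be a smooth monotone decreasing function with ρ(0) = 0, ρ(x) = −ε for all x ≥ R, and ρ(x) = ε for all x ≤ −R. Let f : ℝ × ℝ → ℂ be infinitely differentiable with f(x, θ + 2π) = f(x, θ) for all (x, θ), square-integrable on ℝ × [0, 2π), and satisfying ∂f/∂x − i·s·∂f/∂θ − s·ρ(x)·f = 0 everywhere. Then there exists a constant c ∈ ℂ such that f(x, θ) = c·exp( s·∫₀ˣ ρ(u) du ) for all (x, θ) ∈ ℝ × ℝ. In particular the space of such solutions is one-dimensional over ℂ. -/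
open Real MeasureTheory AddCircle

lemma ode_exp {k K : ℝ → ℝ} {u : ℝ → ℂ}
    (hK : ∀ x, HasDerivAt K (k x) x) (hK0 : K 0 = 0)
    (hu : ∀ x, HasDerivAt u ((k x : ℂ) * u x) x) (x : ℝ) :
    u x = u 0 * Complex.exp (K x) := by
  have h : ∀ y, HasDerivAt (fun y => u y * Complex.exp (-(K y : ℂ))) 0 y := by
    intro y
    have hKc : HasDerivAt (fun y => (-(K y : ℝ) : ℂ)) (-(k y) : ℂ) y := by
      exact ((hK y).ofReal_comp).neg
    have he := hKc.cexp
    have : HasDerivAt (fun y => u y * Complex.exp (-(K y : ℂ))) _ y := (hu y).mul he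
    convert this using 1
    ring
  have hconst : u x * Complex.exp (-(K x : ℂ)) = u 0 * Complex.exp (-(K 0 : ℂ)) :=
    is_const_of_deriv_eq_zero (fun z => (h z).differentiableAt) (fun z => (h z).deriv) x 0
  rw [hK0] at hconst
  simp only [Complex.ofReal_zero, neg_zero, Complex.exp_zero, mul_one] at hconst
  calc u x = u x * Complex.exp (-(K x : ℂ)) * Complex.exp (K x) := by
        rw [mul_assoc, ← Complex.exp_add]; simp
    _ = u 0 * Complex.exp (K x) := by rw [hconst]

lemma cont_eq_zero_of_fourierCoeff_eq_zero {T : ℝ} [hT : Fact (0 < T)] {g : AddCircle T → ℂ}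
    (hg : Continuous g) (h : ∀ n : ℤ, fourierCoeff g n = 0) : ∀ z, g z = 0 := by
  set gL : Lp ℂ 2 (@haarAddCircle T hT) :=
    ContinuousMap.toLp 2 haarAddCircle ℂ ⟨g, hg⟩ with hgL
  have hae : (gL : AddCircle T → ℂ) =ᵐ[haarAddCircle] g := ContinuousMap.coeFn_toLp _ _
  have hcoeff : ∀ n : ℤ, fourierCoeff (gL : AddCircle T → ℂ) n = 0 := by
    intro n
    rw [← h n]
    apply integral_congr_ae
    filter_upwards [hae] with t ht
    rw [ht]
  have h0 : gL = 0 := by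
    have : fourierBasis.repr gL = 0 := by
      ext n
      simp [fourierBasis_repr, hcoeff n]
    simpa using (fourierBasis.repr.map_eq_zero_iff).mp this
  have hzero : g =ᵐ[@haarAddCircle T hT] (fun _ => 0) := by
    refine hae.symm.trans ?_
    rw [h0]
    exact Lp.coeFn_zero ℂ 2 _
  have := (Continuous.ae_eq_iff_eq haarAddCircle hg continuous_const).mp hzero
  intro z; exact congrFun this z

/-- BS⁻ model: every smooth, `2π`-periodic, square-integrable solution of the odd
equation `∂f/∂x − i·s·∂f/∂θ − s·ρ(x)·f = 0` is a constant multiple of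
`exp(s·∫₀ˣ ρ)`; the odd L²-kernel is one-dimensional. -/
theorem BSminus_odd_kernel_one_dimensional (ε R s : ℝ) (hε : 0 < ε) (hε1 : ε < 1)
    (hR : 0 < R) (hs : 0 < s)
    (ρ : ℝ → ℝ) (hρ : ContDiff ℝ (⊤ : ℕ∞) ρ) (hanti : Antitone ρ) (h0 : ρ 0 = 0)
    (hpos : ∀ x : ℝ, R ≤ x → ρ x = -ε) (hneg : ∀ x : ℝ, x ≤ -R → ρ x = ε)
    (f : ℝ × ℝ → ℂ) (hf : ContDiff ℝ (⊤ : ℕ∞) f)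
    (hper : ∀ x θ : ℝ, f (x, θ + 2 * π) = f (x, θ))
    (hL2 : IntegrableOn (fun p => ‖f p‖ ^ 2) (Set.univ ×ˢ Set.Ico 0 (2 * π)))
    (hPDE : ∀ x θ : ℝ, deriv (fun x' => f (x', θ)) x
        - Complex.I * (s : ℂ) * deriv (fun θ' => f (x, θ')) θ
        - (s : ℂ) * (ρ x : ℂ) * f (x, θ) = 0) :
    ∃ c : ℂ, ∀ x θ : ℝ,
      f (x, θ) = c * Complex.exp ((s * ∫ u in (0:ℝ)..x, ρ u : ℝ) : ℂ) := by
  have hfc : Continuous f := hf.continuous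
  have hρc : Continuous ρ := hρ.continuous
  set fx : ℝ × ℝ → ℂ := fun p => fderiv ℝ f p (1, 0) with hfx_def
  set fθ : ℝ × ℝ → ℂ := fun p => fderiv ℝ f p (0, 1) with hfθ_def
  have hfd : Differentiable ℝ f := hf.differentiable (by simp)
  have hfderiv_cont : Continuous (fderiv ℝ f) := (hf.fderiv_right (m := (⊤ : ℕ∞)) (by simp)).continuous
  have hfx_cont : Continuous fx := hfderiv_cont.clm_apply continuous_const
  have hfθ_cont : Continuous fθ := hfderiv_cont.clm_apply continuous_const
  have hslice_x : ∀ x θ : ℝ, HasDerivAt (fun x' => f (x', θ)) (fx (x, θ)) x := by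
    intro x θ
    have h1 : HasDerivAt (fun x' : ℝ => (x', θ)) ((1:ℝ), (0:ℝ)) x :=
      (hasDerivAt_id x).prodMk (hasDerivAt_const x θ)
    exact ((hfd (x, θ)).hasFDerivAt).comp_hasDerivAt x h1
  have hslice_θ : ∀ x θ : ℝ, HasDerivAt (fun θ' => f (x, θ')) (fθ (x, θ)) θ := by
    intro x θ
    have h1 : HasDerivAt (fun θ' : ℝ => (x, θ')) ((0:ℝ), (1:ℝ)) θ :=
      (hasDerivAt_const θ x).prodMk (hasDerivAt_id θ)
    exact ((hfd (x, θ)).hasFDerivAt).comp_hasDerivAt θ h1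
  have hPDE' : ∀ x θ : ℝ, fx (x, θ)
      = Complex.I * s * fθ (x, θ) + s * (ρ x : ℂ) * f (x, θ) := by
    intro x θ
    have h := hPDE x θ
    rw [(hslice_x x θ).deriv, (hslice_θ x θ).deriv] at h
    linear_combination h

  -- Fourier modes
  set e : ℤ → ℝ → ℂ := fun n θ => Complex.exp (-(n:ℂ) * Complex.I * θ) with he_def
  have he_cont : ∀ n : ℤ, Continuous (e n) := fun n =>
    Complex.continuous_exp.comp (continuous_const.mul Complex.continuous_ofReal)
  have he_norm : ∀ (n : ℤ) (θ : ℝ), ‖e n θ‖ = 1 := by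
    intro n θ
    simp only [he_def, Complex.norm_exp]
    norm_num [Complex.mul_re, Complex.mul_im]
  have he_deriv : ∀ (n : ℤ) (θ : ℝ), HasDerivAt (e n) (-(n:ℂ) * Complex.I * e n θ) θ := by
    intro n θ
    have h1 : HasDerivAt (fun θ : ℝ => -(n:ℂ) * Complex.I * θ) (-(n:ℂ) * Complex.I) θ := by
      simpa using ((hasDerivAt_id θ).ofReal_comp.const_mul (-(n:ℂ) * Complex.I))
    have h2 := h1.cexp
    rw [show Complex.exp (-(n:ℂ) * Complex.I * (θ:ℂ)) * (-(n:ℂ) * Complex.I)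
      = -(n:ℂ) * Complex.I * Complex.exp (-(n:ℂ) * Complex.I * θ) from mul_comm _ _] at h2
    exact h2
  set g : ℤ → ℝ → ℂ := fun n x => ∫ θ in (0:ℝ)..(2*π), e n θ * f (x, θ) with hg_def
  set P : ℝ → ℝ := fun x => ∫ u in (0:ℝ)..x, ρ u with hP_def
  have hP : ∀ x : ℝ, HasDerivAt P (ρ x) x := by
    intro x
    exact intervalIntegral.integral_hasDerivAt_right (hρc.intervalIntegrable _ _)
      (hρc.stronglyMeasurableAtFilter _ _) hρc.continuousAt
  have hcontθ : ∀ x : ℝ, Continuous (fun θ => f (x, θ)) := fun x => hfc.comp (Continuous.prodMk_right x)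
  have hcontθ' : ∀ x : ℝ, Continuous (fun θ => fθ (x, θ)) :=
    fun x => hfθ_cont.comp (Continuous.prodMk_right x)
  -- integration by parts in θ
  have hparts : ∀ (n : ℤ) (x : ℝ),
      ∫ θ in (0:ℝ)..(2*π), e n θ * fθ (x, θ) = (n:ℂ) * Complex.I * g n x := by
    intro n x
    have hb := intervalIntegral.integral_mul_deriv_eq_deriv_mul
      (a := (0:ℝ)) (b := 2*π) (u := e n) (u' := fun θ => -(n:ℂ) * Complex.I * e n θ)
      (v := fun θ => f (x, θ)) (v' := fun θ => fθ (x, θ))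
      (fun θ _ => he_deriv n θ) (fun θ _ => hslice_θ x θ)
      ((continuous_const.mul (he_cont n)).intervalIntegrable _ _)
      ((hcontθ' x).intervalIntegrable _ _)
    have hE : e n (2*π) = 1 := by
      show Complex.exp _ = 1
      have : -(n:ℂ) * Complex.I * ((2*π : ℝ) : ℂ) = ((-n : ℤ) : ℂ) * (2 * π * Complex.I) := by
        push_cast; ring
      rw [this, Complex.exp_int_mul_two_pi_mul_I]
    have hE0 : e n 0 = 1 := by
      show Complex.exp _ = 1
      norm_num
    have hper' : f (x, 2*π) = f (x, 0) := by simpa using hper x 0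
    rw [hb, intervalIntegral.integral_congr (g := fun θ => -(n:ℂ) * Complex.I * (e n θ * f (x, θ))) (fun θ _ => by ring), intervalIntegral.integral_const_mul]
    simp only [hE, hE0, hper', hg_def, one_mul]
    ring
  -- derivative of g n
  have hg_deriv : ∀ (n : ℤ) (x₀ : ℝ),
      HasDerivAt (g n) (((s * ρ x₀ - n * s : ℝ) : ℂ) * g n x₀) x₀ := by
    intro n x₀
    obtain ⟨C, hC⟩ : ∃ C, ∀ p ∈ (Set.Icc (x₀-1) (x₀+1)) ×ˢ (Set.Icc (0:ℝ) (2*π)), ‖fx p‖ ≤ C :=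
      (IsCompact.exists_bound_of_continuousOn (isCompact_Icc.prod isCompact_Icc)
        hfx_cont.continuousOn)
    have key := intervalIntegral.hasDerivAt_integral_of_dominated_loc_of_deriv_le
      (F := fun x θ => e n θ * f (x, θ)) (F' := fun x θ => e n θ * fx (x, θ))
      (x₀ := x₀) (a := 0) (b := 2*π) (μ := volume) (bound := fun _ => C)
      (s := Metric.ball x₀ 1) (Metric.ball_mem_nhds x₀ one_pos)
      (Filter.Eventually.of_forall fun x =>
        (((he_cont n).mul (hfc.comp (Continuous.prodMk_right x))).aestronglyMeasurable))
      (((he_cont n).mul (hfc.comp (Continuous.prodMk_right x₀))).intervalIntegrable _ _)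
      (((he_cont n).mul (hfx_cont.comp (Continuous.prodMk_right x₀))).aestronglyMeasurable)
      (Filter.Eventually.of_forall fun θ hθ => ?_)
      (intervalIntegrable_const)
      (Filter.Eventually.of_forall fun θ hθ => fun x _ => (hslice_x x θ).const_mul (e n θ))
    · have h2 := key.2
      have heq : ∫ θ in (0:ℝ)..(2*π), e n θ * fx (x₀, θ)
          = ((s * ρ x₀ - n * s : ℝ) : ℂ) * g n x₀ := by
        rw [intervalIntegral.integral_congr
          (g := fun θ => Complex.I * s * (e n θ * fθ (x₀, θ))
            + (s * (ρ x₀ : ℂ)) * (e n θ * f (x₀, θ)))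
          (fun θ _ => by rw [hPDE' x₀ θ]; ring)]
        rw [intervalIntegral.integral_add (f := fun θ => Complex.I * s * (e n θ * fθ (x₀, θ)))
          (g := fun θ => (s * (ρ x₀ : ℂ)) * (e n θ * f (x₀, θ)))
          ((((he_cont n).mul (hcontθ' x₀)).intervalIntegrable _ _).const_mul _)
          ((((he_cont n).mul (hcontθ x₀)).intervalIntegrable _ _).const_mul _),
          intervalIntegral.integral_const_mul, intervalIntegral.integral_const_mul,
          hparts n x₀]
        simp only [hg_def]
        push_cast
        ring_nf
        rw [Complex.I_sq]
        ring
      rwa [heq] at h2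
    · intro x hx
      rw [norm_mul, he_norm, one_mul]
      apply hC
      constructor
      · simp only [Metric.mem_ball, Real.dist_eq] at hx
        constructor <;> [linarith [abs_le.mp hx.le |>.1]; linarith [abs_le.mp hx.le |>.2]]
      · have := Set.uIoc_of_le (by positivity : (0:ℝ) ≤ 2*π) ▸ hθ
        exact ⟨this.1.le, this.2⟩

  have hP0 : P 0 = 0 := intervalIntegral.integral_same
  have hg_formula : ∀ (n : ℤ) (x : ℝ),
      g n x = g n 0 * Complex.exp (((s * P x - n * s * x : ℝ)) : ℂ) := by
    intro n x
    have hK : ∀ y : ℝ, HasDerivAt (fun y => s * P y - (n:ℝ) * s * y) (s * ρ y - (n:ℝ) * s) y := by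
      intro y
      have h1 := (hP y).const_mul s
      have h2 := (hasDerivAt_id y).const_mul ((n:ℝ) * s)
      have h3 := h1.sub h2; rw [mul_one] at h3; exact h3
    have hK0 : s * P 0 - (n:ℝ) * s * 0 = 0 := by simp [hP0]
    exact ode_exp hK hK0 (fun y => hg_deriv n y) x
  -- integrability of the slice L² mass
  set A : ℝ → ℝ := fun x => ∫ θ in Set.Ico (0:ℝ) (2*π), ‖f (x, θ)‖^2 with hA_def
  have hA_int : Integrable A := by
    have hmeq : ((volume : Measure (ℝ×ℝ))).restrict (Set.univ ×ˢ Set.Ico (0:ℝ) (2*π))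
        = (volume : Measure ℝ).prod ((volume : Measure ℝ).restrict (Set.Ico 0 (2*π))) := by
      rw [Measure.volume_eq_prod ℝ ℝ, ← Measure.prod_restrict, Measure.restrict_univ]
    have h1 : Integrable (fun p : ℝ × ℝ => ‖f p‖^2)
        ((volume : Measure ℝ).prod ((volume : Measure ℝ).restrict (Set.Ico 0 (2*π)))) := by
      rw [← hmeq]; exact hL2
    exact h1.integral_prod_left
  have hA_nonneg : ∀ x, 0 ≤ A x :=
    fun x => integral_nonneg (fun θ => pow_nonneg (norm_nonneg _) 2)
  have hAeq : ∀ x : ℝ, (∫ θ in (0:ℝ)..(2*π), ‖f (x, θ)‖^2) = A x := by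
    intro x
    rw [intervalIntegral.integral_of_le (by positivity : (0:ℝ) ≤ 2*π)]
    simp only [hA_def]
    rw [integral_Ioc_eq_integral_Ioo, integral_Ico_eq_integral_Ioo]
  have hbound : ∀ (n : ℤ) (x : ℝ), ‖g n x‖ ≤ π + (1/2) * A x := by
    intro n x
    have h1 : ‖g n x‖ ≤ ∫ θ in (0:ℝ)..(2*π), ‖e n θ * f (x, θ)‖ :=
      intervalIntegral.norm_integral_le_integral_norm (by positivity)
    have h2 : (∫ θ in (0:ℝ)..(2*π), ‖e n θ * f (x, θ)‖)
        = ∫ θ in (0:ℝ)..(2*π), ‖f (x, θ)‖ :=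
      intervalIntegral.integral_congr (fun θ _ => by rw [norm_mul, he_norm, one_mul])
    have h3 : (∫ θ in (0:ℝ)..(2*π), ‖f (x, θ)‖)
        ≤ ∫ θ in (0:ℝ)..(2*π), (1/2 + (1/2) * ‖f (x, θ)‖^2) := by
      apply intervalIntegral.integral_mono_on (by positivity)
      · exact ((hcontθ x).norm).intervalIntegrable _ _
      · exact (continuous_const.add (continuous_const.mul ((hcontθ x).norm.pow 2))).intervalIntegrable _ _
      · intro θ _
        nlinarith [sq_nonneg (‖f (x, θ)‖ - 1), norm_nonneg (f (x, θ))]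
    have h4 : (∫ θ in (0:ℝ)..(2*π), (1/2 + (1/2) * ‖f (x, θ)‖^2))
        = π + (1/2) * A x := by
      rw [intervalIntegral.integral_add (f := fun _ => (1/2:ℝ)) (g := fun θ => (1/2:ℝ) * ‖f (x, θ)‖^2) (intervalIntegrable_const)
        (((continuous_const.mul ((hcontθ x).norm.pow 2))).intervalIntegrable _ _),
        intervalIntegral.integral_const_mul, hAeq, intervalIntegral.integral_const]
      simp only [smul_eq_mul]
      ring
    linarith
  -- no integrable function can be ≥ 1 on an infinite ray
  have hnontrivIci : ∀ X : ℝ, ¬ (∀ x : ℝ, X ≤ x → 1 ≤ A x) := by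
    intro X hX
    have h1 : IntegrableOn (fun _ : ℝ => (1:ℝ)) (Set.Ici X) := by
      refine Integrable.mono (hA_int.integrableOn) aestronglyMeasurable_const ?_
      rw [ae_restrict_iff' measurableSet_Ici]
      exact Filter.Eventually.of_forall fun x hx => by
        rw [norm_one, Real.norm_of_nonneg (hA_nonneg x)]; exact hX x hx
    rcases (integrableOn_const_iff).mp h1 with h | h
    · norm_num at h
    · rw [Real.volume_Ici] at h; exact (lt_irrefl _ h).elim
  have hnontrivIic : ∀ X : ℝ, ¬ (∀ x : ℝ, x ≤ X → 1 ≤ A x) := by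
    intro X hX
    have h1 : IntegrableOn (fun _ : ℝ => (1:ℝ)) (Set.Iic X) := by
      refine Integrable.mono (hA_int.integrableOn) aestronglyMeasurable_const ?_
      rw [ae_restrict_iff' measurableSet_Iic]
      exact Filter.Eventually.of_forall fun x hx => by
        rw [norm_one, Real.norm_of_nonneg (hA_nonneg x)]; exact hX x hx
    rcases (integrableOn_const_iff).mp h1 with h | h
    · norm_num at h
    · rw [Real.volume_Iic] at h; exact (lt_irrefl _ h).elim

  have hexp_norm : ∀ y : ℝ, ‖Complex.exp ((y:ℝ) : ℂ)‖ = Real.exp y := by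
    intro y
    rw [Complex.norm_exp, Complex.ofReal_re]
  have hg_zero : ∀ n : ℤ, n ≠ 0 → ∀ x : ℝ, g n x = 0 := by
    intro n hn x
    suffices h : g n 0 = 0 by rw [hg_formula n x, h, zero_mul]
    by_contra ha
    have hna : 0 < ‖g n 0‖ := norm_pos_iff.mpr ha
    set M : ℝ := (π + 1) / ‖g n 0‖ with hM_def
    have hgnorm : ∀ y : ℝ, ‖g n y‖ = ‖g n 0‖ * Real.exp (s * P y - (n:ℝ) * s * y) := by
      intro y
      rw [hg_formula n y, norm_mul, hexp_norm]
    have hkey : ∀ y : ℝ, M ≤ s * P y - (n:ℝ) * s * y → 1 ≤ A y := by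
      intro y hy
      have hexp : M ≤ Real.exp (s * P y - (n:ℝ) * s * y) :=
        le_trans hy (by linarith [Real.add_one_le_exp (s * P y - (n:ℝ) * s * y)])
      have h3 : π + 1 ≤ ‖g n y‖ := by
        rw [hgnorm y]
        rw [hM_def, div_le_iff₀ hna] at hexp
        nlinarith
      have h4 := hbound n y
      linarith
    rcases lt_or_gt_of_ne hn with hneg' | hpos'
    · -- n < 0 : blow-up at +∞
      have hcast : (n:ℝ) ≤ -1 := by exact_mod_cast (by omega : n ≤ -1)
      have hPx : ∀ y : ℝ, R ≤ y → P y = P R - ε * (y - R) := by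
        intro y hy
        have hsplit : (∫ u in (0:ℝ)..R, ρ u) + ∫ u in R..y, ρ u = ∫ u in (0:ℝ)..y, ρ u :=
          intervalIntegral.integral_add_adjacent_intervals (hρc.intervalIntegrable _ _)
            (hρc.intervalIntegrable _ _)
        have hcongr : (∫ u in R..y, ρ u) = ∫ u in R..y, (-ε : ℝ) := by
          apply intervalIntegral.integral_congr
          intro u hu
          rw [Set.uIcc_of_le hy] at hu
          exact hpos u hu.1
        rw [hcongr, intervalIntegral.integral_const, smul_eq_mul] at hsplit
        simp only [hP_def]
        linarith
      set X : ℝ := max R ((M - s*(P R + ε*R))/(s*(1-ε))) with hX_def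
      refine hnontrivIci X (fun y hy => ?_)
      have hyR : R ≤ y := le_trans (le_max_left _ _) hy
      have hy2 : (M - s*(P R + ε*R))/(s*(1-ε)) ≤ y := le_trans (le_max_right _ _) hy
      have h1 : (0:ℝ) < s*(1-ε) := by nlinarith
      have h2 : M - s*(P R + ε*R) ≤ s*(1-ε)*y := by
        rw [div_le_iff₀ h1] at hy2; nlinarith
      have hy0 : 0 < y := lt_of_lt_of_le hR hyR
      refine hkey y ?_
      rw [hPx y hyR]
      nlinarith [mul_nonneg (mul_nonneg (by linarith : (0:ℝ) ≤ -(n:ℝ) - 1) hs.le) hy0.le]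
    · -- n > 0 : blow-up at -∞
      have hcast : (1:ℝ) ≤ (n:ℝ) := by exact_mod_cast (by omega : 1 ≤ n)
      have hPx : ∀ y : ℝ, y ≤ -R → P y = P (-R) + ε * (y + R) := by
        intro y hy
        have hsplit : (∫ u in (0:ℝ)..y, ρ u) + ∫ u in y..(-R), ρ u = ∫ u in (0:ℝ)..(-R), ρ u :=
          intervalIntegral.integral_add_adjacent_intervals (hρc.intervalIntegrable _ _)
            (hρc.intervalIntegrable _ _)
        have hcongr : (∫ u in y..(-R), ρ u) = ∫ u in y..(-R), (ε : ℝ) := by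
          apply intervalIntegral.integral_congr
          intro u hu
          rw [Set.uIcc_of_le hy] at hu
          exact hneg u hu.2
        rw [hcongr, intervalIntegral.integral_const, smul_eq_mul] at hsplit
        simp only [hP_def]
        linarith
      set X : ℝ := min (-R) (-((M - s*(P (-R) + ε*R))/(s*(1-ε)))) with hX_def
      refine hnontrivIic X (fun y hy => ?_)
      have hyR : y ≤ -R := le_trans hy (min_le_left _ _)
      have hy2 : y ≤ -((M - s*(P (-R) + ε*R))/(s*(1-ε))) := le_trans hy (min_le_right _ _)
      have h1 : (0:ℝ) < s*(1-ε) := by nlinarith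
      have h2 : M - s*(P (-R) + ε*R) ≤ s*(1-ε)*(-y) := by
        have h3 : (M - s*(P (-R) + ε*R))/(s*(1-ε)) ≤ -y := by linarith
        rw [div_le_iff₀ h1] at h3
        nlinarith
      have hy0 : y < 0 := lt_of_le_of_lt hyR (by linarith)
      refine hkey y ?_
      rw [hPx y hyR]
      nlinarith [mul_nonneg (mul_nonneg (by linarith : (0:ℝ) ≤ (n:ℝ) - 1) hs.le)
        (by linarith : (0:ℝ) ≤ -y)]

  -- integrals of pure modes
  have h2pi_ne : ((2*π:ℝ) : ℂ) ≠ 0 := Complex.ofReal_ne_zero.mpr (by positivity)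
  have hItwoPi : (∫ θ in (0:ℝ)..(2*π), e 0 θ) = ((2*π:ℝ) : ℂ) := by
    simp only [he_def, Int.cast_zero, neg_zero, zero_mul, Complex.exp_zero]
    rw [intervalIntegral.integral_const]
    norm_num
  have hI0 : ∀ n : ℤ, n ≠ 0 → (∫ θ in (0:ℝ)..(2*π), e n θ) = 0 := by
    intro n hn
    have hc : (-(n:ℂ) * Complex.I) ≠ 0 :=
      mul_ne_zero (neg_ne_zero.mpr (Int.cast_ne_zero.mpr hn)) Complex.I_ne_zero
    have hE2 : Complex.exp (-(n:ℂ) * Complex.I * ((2*π:ℝ):ℂ)) = 1 := by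
      have harg : -(n:ℂ) * Complex.I * ((2*π : ℝ) : ℂ) = ((-n : ℤ) : ℂ) * (2 * π * Complex.I) := by
        push_cast; ring
      rw [harg, Complex.exp_int_mul_two_pi_mul_I]
    have hE0 : Complex.exp (-(n:ℂ) * Complex.I * ((0:ℝ):ℂ)) = 1 := by norm_num
    simp only [he_def]
    rw [integral_exp_mul_complex hc, hE2, hE0]
    simp
  -- conclusion via Fourier completeness
  haveI hfact : Fact (0 < 2*π) := ⟨by positivity⟩
  set c : ℂ := g 0 0 / ((2*π:ℝ) : ℂ) with hc_def
  refine ⟨c, fun x θ => ?_⟩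
  set E : ℂ := Complex.exp (((s * P x : ℝ)) : ℂ) with hEx_def
  have hφper : Function.Periodic (fun θ => f (x, θ) - c * E) (2*π) := by
    intro θ; simp [hper x θ]
  have hφcont : Continuous (fun θ : ℝ => f (x, θ) - c * E) := (hcontθ x).sub continuous_const
  set Φ : AddCircle (2*π) → ℂ := hφper.lift with hΦ_def
  have hΦcont : Continuous Φ := hφcont.quotient_liftOn' _
  have hΦcoe : ∀ θ : ℝ, Φ (θ : AddCircle (2*π)) = f (x, θ) - c * E :=
    fun θ => hφper.lift_coe θ
  have hcoeff : ∀ n : ℤ, fourierCoeff Φ n = 0 := by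
    intro n
    rw [fourierCoeff_eq_intervalIntegral Φ n 0]
    have h1 : Set.EqOn (fun θ : ℝ => (fourier (-n) (θ : AddCircle (2*π)) : ℂ) • Φ (θ : AddCircle (2*π)))
        (fun θ : ℝ => e n θ * (f (x, θ) - c * E)) (Set.uIcc (0:ℝ) (0 + 2*π)) := by
      intro θ _
      simp only [smul_eq_mul]
      rw [hΦcoe θ]
      congr 1
      rw [fourier_coe_apply]
      simp only [he_def]
      have hπ : (π:ℂ) ≠ 0 := Complex.ofReal_ne_zero.mpr Real.pi_ne_zero
      congr 1
      push_cast
      field_simp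
    rw [intervalIntegral.integral_congr h1, zero_add]
    have h2 : (∫ θ in (0:ℝ)..(2*π), e n θ * (f (x, θ) - c * E))
        = g n x - (c * E) * ∫ θ in (0:ℝ)..(2*π), e n θ := by
      rw [intervalIntegral.integral_congr
        (g := fun θ => e n θ * f (x, θ) - (c * E) * e n θ) (fun θ _ => by ring),
        intervalIntegral.integral_sub (f := fun θ => e n θ * f (x, θ)) (g := fun θ => (c * E) * e n θ) (((he_cont n).mul (hcontθ x)).intervalIntegrable _ _)
          ((continuous_const.mul (he_cont n)).intervalIntegrable _ _),
        intervalIntegral.integral_const_mul]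
    rcases eq_or_ne n 0 with rfl | hn
    · rw [h2, hItwoPi, hg_formula 0 x]
      have : (g 0 0) * Complex.exp (((s * P x - (0:ℤ) * s * x : ℝ)) : ℂ)
          - c * E * ((2*π:ℝ):ℂ) = 0 := by
        rw [hc_def, hEx_def]
        have harg : ((s * P x - ((0:ℤ):ℝ) * s * x : ℝ) : ℂ) = ((s * P x : ℝ) : ℂ) := by
          push_cast; ring
        rw [harg]
        have hπ2 : (2 * (π:ℂ)) ≠ 0 := by simpa using h2pi_ne
        field_simp [hπ2]
        ring
      rw [this, smul_zero]
    · rw [h2, hI0 n hn, hg_zero n hn x]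
      simp
  have hzero := cont_eq_zero_of_fourierCoeff_eq_zero hΦcont hcoeff (θ : AddCircle (2*π))
  rw [hΦcoe θ] at hzero
  have := sub_eq_zero.mp hzero
  exact this
end
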